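/- arXiv:1610.04976 — 12 statements merged into one kernel-verified Lean document; each statement's English description precedes it below -/
import Mathlib

section
/- Let h ∈ (0,1) and θ > 0 be real numbers, let m, m' ≥ 1 be integers, let R : {1,…,m} → ℝ and R' : {1,…,m'} → ℝ satisfy R_k > 0 for all k, R'_j > 0 for all j, Σ_k R_k = 1 and Σ_j R'_j = 1, and let L_k, M_k (1 ≤ k ≤ m) and L'_j, M'_j (1 ≤ j ≤ m') be integers such that L_k² + M_k²·θ² = 2θ²(1−h) for all k, (L'_j)² + (M'_j)²·θ² = 2θ²(1+h) for all j, and Σ_k R_k(L_k² − M_k²θ²) + Σ_j R'_j((L'_j)² − (M'_j)²θ²) = 0. Then h ≤ 1/2, and for every k one has M_k² = 1 and L_k² = θ²(1−2h), and for every j one has (M'_j)² = 1 and (L'_j)² = θ²(1+2h). -/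
/-- The case analysis for rectangular tori: under the periodicity
and balancing conditions, `h ≤ 1/2`, all `M_k² = 1`, `L_k² = θ²(1−2h)`,
all `(M'_j)² = 1` and `(L'_j)² = θ²(1+2h)`. -/
theorem stmt2 (h θ : ℝ) (hh : h ∈ Set.Ioo (0 : ℝ) 1) (hθ : 0 < θ)
    (m m' : ℕ) (hm : 1 ≤ m) (hm' : 1 ≤ m')
    (R : Fin m → ℝ) (R' : Fin m' → ℝ)
    (hR : ∀ k, 0 < R k) (hR' : ∀ j, 0 < R' j)
    (hRsum : ∑ k, R k = 1) (hR'sum : ∑ j, R' j = 1)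
    (L M : Fin m → ℤ) (L' M' : Fin m' → ℤ)
    (h1 : ∀ k, (L k : ℝ) ^ 2 + (M k : ℝ) ^ 2 * θ ^ 2 = 2 * θ ^ 2 * (1 - h))
    (h2 : ∀ j, (L' j : ℝ) ^ 2 + (M' j : ℝ) ^ 2 * θ ^ 2 = 2 * θ ^ 2 * (1 + h))
    (h3 : ∑ k, R k * ((L k : ℝ) ^ 2 - (M k : ℝ) ^ 2 * θ ^ 2)
        + ∑ j, R' j * ((L' j : ℝ) ^ 2 - (M' j : ℝ) ^ 2 * θ ^ 2) = 0) :
    h ≤ 1 / 2 ∧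
    (∀ k, (M k) ^ 2 = 1 ∧ (L k : ℝ) ^ 2 = θ ^ 2 * (1 - 2 * h)) ∧
    (∀ j, (M' j) ^ 2 = 1 ∧ (L' j : ℝ) ^ 2 = θ ^ 2 * (1 + 2 * h)) := by
  obtain ⟨hh0, hh1⟩ := hh
  have hθ2 : (0:ℝ) < θ ^ 2 := by positivity
  -- integer bounds on M, M'
  have hMle : ∀ k, (M k) ^ 2 ≤ 1 := by
    intro k
    have hL : (0:ℝ) ≤ (L k : ℝ) ^ 2 := sq_nonneg _
    have hlt : ((M k : ℝ)) ^ 2 < 2 := by nlinarith [h1 k]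
    have : ((M k) ^ 2 : ℤ) < 2 := by exact_mod_cast (by push_cast; linarith : ((M k)^2 : ℝ) < 2)
    omega
  have hM'le : ∀ j, (M' j) ^ 2 ≤ 1 := by
    intro j
    have hL : (0:ℝ) ≤ (L' j : ℝ) ^ 2 := sq_nonneg _
    have hlt : ((M' j : ℝ)) ^ 2 < 4 := by nlinarith [h2 j]
    have h4 : ((M' j) ^ 2 : ℤ) < 4 := by
      exact_mod_cast (by push_cast; linarith : ((M' j)^2 : ℝ) < 4)
    have habs : |M' j| < 2 := by
      by_contra hc
      push_neg at hc
      have : (2:ℤ)^2 ≤ |M' j|^2 := by nlinarith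
      rw [sq_abs] at this; omega
    have : -2 < M' j ∧ M' j < 2 := abs_lt.mp habs
    nlinarith [this.1, this.2]
  -- key balancing identity
  set A := ∑ k, R k * ((M k : ℝ)) ^ 2 with hA
  set B := ∑ j, R' j * ((M' j : ℝ)) ^ 2 with hB
  have S1 : ∑ k, R k * ((L k : ℝ) ^ 2 - (M k : ℝ) ^ 2 * θ ^ 2)
      = 2 * θ ^ 2 * (1 - h) - 2 * θ ^ 2 * A := by
    have : ∀ k ∈ Finset.univ, R k * ((L k : ℝ) ^ 2 - (M k : ℝ) ^ 2 * θ ^ 2)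
        = 2 * θ ^ 2 * (1 - h) * R k - 2 * θ ^ 2 * (R k * ((M k : ℝ)) ^ 2) := by
      intro k _
      linear_combination R k * h1 k
    rw [Finset.sum_congr rfl this, Finset.sum_sub_distrib, ← Finset.mul_sum,
      ← Finset.mul_sum, hRsum, hA]
    ring
  have S2 : ∑ j, R' j * ((L' j : ℝ) ^ 2 - (M' j : ℝ) ^ 2 * θ ^ 2)
      = 2 * θ ^ 2 * (1 + h) - 2 * θ ^ 2 * B := by
    have : ∀ j ∈ Finset.univ, R' j * ((L' j : ℝ) ^ 2 - (M' j : ℝ) ^ 2 * θ ^ 2)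
        = 2 * θ ^ 2 * (1 + h) * R' j - 2 * θ ^ 2 * (R' j * ((M' j : ℝ)) ^ 2) := by
      intro j _
      linear_combination R' j * h2 j
    rw [Finset.sum_congr rfl this, Finset.sum_sub_distrib, ← Finset.mul_sum,
      ← Finset.mul_sum, hR'sum, hB]
    ring
  have hAB : A + B = 2 := by
    rw [S1, S2] at h3
    nlinarith [h3]
  have hAle : A ≤ 1 := by
    rw [hA, ← hRsum]
    apply Finset.sum_le_sum
    intro k _
    have h1' : ((M k : ℝ))^2 ≤ 1 := by exact_mod_cast (by exact_mod_cast hMle k : ((M k)^2 : ℝ) ≤ 1)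
    nlinarith [hR k]
  have hBle : B ≤ 1 := by
    rw [hB, ← hR'sum]
    apply Finset.sum_le_sum
    intro j _
    have h1' : ((M' j : ℝ))^2 ≤ 1 := by exact_mod_cast (by exact_mod_cast hM'le j : ((M' j)^2 : ℝ) ≤ 1)
    nlinarith [hR' j]
  have hAeq : A = 1 := by linarith
  have hBeq : B = 1 := by linarith
  -- each M_k² = 1
  have hMsq : ∀ k, (M k) ^ 2 = 1 := by
    intro k
    by_contra hc
    have h0 : (M k) ^ 2 = 0 := by have := hMle k; have := sq_nonneg (M k); omega
    have hlt : A < ∑ k, R k := by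
      rw [hA]
      apply Finset.sum_lt_sum
      · intro i _
        have h1' : ((M i : ℝ))^2 ≤ 1 := by
          exact_mod_cast (by exact_mod_cast hMle i : ((M i)^2 : ℝ) ≤ 1)
        nlinarith [hR i]
      · refine ⟨k, Finset.mem_univ k, ?_⟩
        have : ((M k : ℝ))^2 = 0 := by exact_mod_cast (by exact_mod_cast h0 : ((M k)^2 : ℝ) = 0)
        rw [this, mul_zero]
        exact hR k
    rw [hRsum] at hlt
    linarith
  have hM'sq : ∀ j, (M' j) ^ 2 = 1 := by
    intro j
    by_contra hc
    have h0 : (M' j) ^ 2 = 0 := by have := hM'le j; have := sq_nonneg (M' j); omega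
    have hlt : B < ∑ j, R' j := by
      rw [hB]
      apply Finset.sum_lt_sum
      · intro i _
        have h1' : ((M' i : ℝ))^2 ≤ 1 := by
          exact_mod_cast (by exact_mod_cast hM'le i : ((M' i)^2 : ℝ) ≤ 1)
        nlinarith [hR' i]
      · refine ⟨j, Finset.mem_univ j, ?_⟩
        have : ((M' j : ℝ))^2 = 0 := by exact_mod_cast (by exact_mod_cast h0 : ((M' j)^2 : ℝ) = 0)
        rw [this, mul_zero]
        exact hR' j
    rw [hR'sum] at hlt
    linarith
  have hLsq : ∀ k, (L k : ℝ) ^ 2 = θ ^ 2 * (1 - 2 * h) := by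
    intro k
    have hm1 : ((M k : ℝ))^2 = 1 := by exact_mod_cast (by exact_mod_cast hMsq k : ((M k)^2 : ℝ) = 1)
    linear_combination h1 k - θ ^ 2 * hm1
  have hL'sq : ∀ j, (L' j : ℝ) ^ 2 = θ ^ 2 * (1 + 2 * h) := by
    intro j
    have hm1 : ((M' j : ℝ))^2 = 1 := by
      exact_mod_cast (by exact_mod_cast hM'sq j : ((M' j)^2 : ℝ) = 1)
    linear_combination h2 j - θ ^ 2 * hm1
  have hhalf : h ≤ 1 / 2 := by
    have k0 : Fin m := ⟨0, hm⟩
    have := hLsq k0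
    nlinarith [sq_nonneg ((L k0 : ℝ))]
  exact ⟨hhalf, fun k => ⟨hMsq k, hLsq k⟩, fun j => ⟨hM'sq j, hL'sq j⟩⟩
end

section
/- Let h ∈ (0,1) and θ > 0 be real numbers. Suppose there exist nonnegative integers p₁, q₁, p₂, q₂ with 2(1−h) = p₁² + q₁²/θ² and 2(1+h) = p₂² + q₂²/θ², and integers L and L' with L² = θ²(1−2h) and (L')² = θ²(1+2h). Then p₁² = p₂² = 1, θ² = (q₁² + q₂²)/2, q₁ < q₂, and h = (q₂² − q₁²)/(2(q₁² + q₂²)). -/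
lemma aux3 : ∀ u v : ZMod 3, 2*u^2 = v^2 → u = 0 ∧ v = 0 := by decide

lemma keyN : ∀ n : ℕ, ∀ x a b : ℤ, x.natAbs ≤ n → 2*x^2 = 3*a^2 + b^2 →
    x = 0 ∧ a = 0 ∧ b = 0 := by
  intro n
  induction n with
  | zero =>
    intro x a b hx heq
    have hx0 : x = 0 := by omega
    subst hx0
    constructor; · rfl
    constructor
    · nlinarith [sq_nonneg a, sq_nonneg b]
    · nlinarith [sq_nonneg a, sq_nonneg b]
  | succ n ih =>
    intro x a b hx heq
    rcases eq_or_ne x 0 with rfl | hx0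
    · refine ⟨rfl, ?_, ?_⟩
      · nlinarith [sq_nonneg a, sq_nonneg b]
      · nlinarith [sq_nonneg a, sq_nonneg b]
    · have hz : ((2*x^2 : ℤ) : ZMod 3) = ((3*a^2 + b^2 : ℤ) : ZMod 3) := by rw [heq]
      push_cast at hz
      have h3 : (3 : ZMod 3) = 0 := by decide
      rw [h3] at hz
      have hz' : 2*(x : ZMod 3)^2 = (b : ZMod 3)^2 := by linear_combination hz
      obtain ⟨hx3, hb3⟩ := aux3 _ _ hz'
      have hdx : (3:ℤ) ∣ x := by
        rwa [ZMod.intCast_zmod_eq_zero_iff_dvd] at hx3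
      have hdb : (3:ℤ) ∣ b := by
        rwa [ZMod.intCast_zmod_eq_zero_iff_dvd] at hb3
      obtain ⟨x', rfl⟩ := hdx
      obtain ⟨b', rfl⟩ := hdb
      have hda : (3:ℤ) ∣ a := by
        have e : 3*a^2 = 18*x'^2 - 9*b'^2 := by linear_combination -heq
        have : (3:ℤ) ∣ a^2 := ⟨2*x'^2 - b'^2, by linarith⟩
        exact Int.Prime.dvd_pow' (by norm_num) this
      obtain ⟨a', rfl⟩ := hda
      have heq' : 2*x'^2 = 3*a'^2 + b'^2 := by nlinarith [heq]
      have hxlt : x'.natAbs ≤ n := by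
        have hne : x' ≠ 0 := by rintro rfl; simp at hx0
        have hpos : 0 < x'.natAbs := Int.natAbs_pos.mpr hne
        have hmul : (3*x').natAbs = 3 * x'.natAbs := by
          simp [Int.natAbs_mul]
        omega
      obtain ⟨h1, h2, h3'⟩ := ih x' a' b' hxlt heq'
      subst h1; subst h2; subst h3'
      norm_num

lemma key (x a b : ℤ) (heq : 2*x^2 = 3*a^2 + b^2) : x = 0 ∧ a = 0 ∧ b = 0 :=
  keyN x.natAbs x a b le_rfl heq

/-- If `2(1−h) = p₁² + q₁²/θ²`, `2(1+h) = p₂² + q₂²/θ²` with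
nonnegative integers `p₁,q₁,p₂,q₂`, and there are integers `L, L'` with
`L² = θ²(1−2h)`, `(L')² = θ²(1+2h)`, then `p₁² = p₂² = 1`,
`θ² = (q₁²+q₂²)/2`, `q₁ < q₂` and `h = (q₂²−q₁²)/(2(q₁²+q₂²))`. -/
theorem stmt3 (h θ : ℝ) (hh : h ∈ Set.Ioo (0 : ℝ) 1) (hθ : 0 < θ)
    (p₁ q₁ p₂ q₂ : ℕ)
    (e1 : 2 * (1 - h) = (p₁ : ℝ) ^ 2 + (q₁ : ℝ) ^ 2 / θ ^ 2)
    (e2 : 2 * (1 + h) = (p₂ : ℝ) ^ 2 + (q₂ : ℝ) ^ 2 / θ ^ 2)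
    (L L' : ℤ)
    (e3 : (L : ℝ) ^ 2 = θ ^ 2 * (1 - 2 * h))
    (e4 : (L' : ℝ) ^ 2 = θ ^ 2 * (1 + 2 * h)) :
    p₁ ^ 2 = 1 ∧ p₂ ^ 2 = 1 ∧ θ ^ 2 = ((q₁ : ℝ) ^ 2 + (q₂ : ℝ) ^ 2) / 2 ∧ q₁ < q₂ ∧
      h = ((q₂ : ℝ) ^ 2 - (q₁ : ℝ) ^ 2) / (2 * ((q₁ : ℝ) ^ 2 + (q₂ : ℝ) ^ 2)) := by
  obtain ⟨hh0, hh1⟩ := hh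
  have hθ2 : (0:ℝ) < θ^2 := by positivity
  have hθ2' : (θ:ℝ)^2 ≠ 0 := ne_of_gt hθ2
  -- h ≤ 1/2
  have hhalf : h ≤ 1/2 := by nlinarith [sq_nonneg ((L:ℝ))]
  -- clear denominators
  have E1 : 2 * (1 - h) * θ^2 = (p₁:ℝ)^2 * θ^2 + (q₁:ℝ)^2 := by
    field_simp at e1; linarith
  have E2 : 2 * (1 + h) * θ^2 = (p₂:ℝ)^2 * θ^2 + (q₂:ℝ)^2 := by
    field_simp at e2; linarith
  have hq1nn : (0:ℝ) ≤ (q₁:ℝ)^2 / θ^2 := by positivity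
  have hq2nn : (0:ℝ) ≤ (q₂:ℝ)^2 / θ^2 := by positivity
  -- p₁ ≤ 1
  have hp1 : p₁ ≤ 1 := by
    by_contra hc
    have : (2:ℝ) ≤ (p₁:ℝ) := by exact_mod_cast Nat.succ_le_of_lt (by omega)
    nlinarith
  have hp2 : p₂ ≤ 1 := by
    by_contra hc
    have : (2:ℝ) ≤ (p₂:ℝ) := by exact_mod_cast Nat.succ_le_of_lt (by omega)
    nlinarith
  have hL'ne : (L':ℝ)^2 ≠ 0 := by
    rw [e4]; positivity
  -- p₁ ≠ 0
  have hp1ne : p₁ ≠ 0 := by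
    intro h0
    have hq1 : (2:ℝ) * (q₁:ℝ)^2 = 3*(L:ℝ)^2 + (L':ℝ)^2 := by
      rw [e3, e4]; subst h0; push_cast at E1 ⊢; linear_combination -2*E1
    have hZ : 2*(q₁:ℤ)^2 = 3*L^2 + L'^2 := by exact_mod_cast hq1
    obtain ⟨_, _, hL'⟩ := key (q₁:ℤ) L L' hZ
    exact hL'ne (by rw [hL']; norm_num)
  have hp2ne : p₂ ≠ 0 := by
    intro h0
    have hq2 : (2:ℝ) * (q₂:ℝ)^2 = 3*(L':ℝ)^2 + (L:ℝ)^2 := by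
      rw [e3, e4]; subst h0; push_cast at E2 ⊢; linear_combination -2*E2
    have hZ : 2*(q₂:ℤ)^2 = 3*L'^2 + L^2 := by exact_mod_cast hq2
    obtain ⟨hq20, hL', _⟩ := key (q₂:ℤ) L' L hZ
    exact hL'ne (by rw [hL']; norm_num)
  have hp1e : p₁ = 1 := by omega
  have hp2e : p₂ = 1 := by omega
  subst hp1e; subst hp2e
  push_cast at E1 E2
  have hsum : (q₁:ℝ)^2 + (q₂:ℝ)^2 = 2*θ^2 := by linear_combination -E1 - E2
  have hdiff : (q₂:ℝ)^2 - (q₁:ℝ)^2 = 4*h*θ^2 := by linear_combination E1 - E2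
  refine ⟨rfl, rfl, by linarith, ?_, ?_⟩
  · have hlt : (q₁:ℝ)^2 < (q₂:ℝ)^2 := by nlinarith
    by_contra hc
    have : (q₂:ℝ) ≤ (q₁:ℝ) := by exact_mod_cast not_lt.mp hc
    nlinarith [Nat.cast_nonneg (α := ℝ) q₂]
  · rw [hdiff, hsum]
    field_simp
    ring
end

section
/- Let h ∈ (0,1) and let a, b be positive real numbers. The system of equations (1+h)s² − (1+2h)s + (1+a)h = 0 and (1+h)s² − s + bh = 0 admits a common real solution s with h/(1+h) < s ≤ 1/2 if and only if 0 ≤ b − a < 1 and h = (1 − (a−b)²)/(1 + (a−b)² + 2(a+b)); in that case the common solution is s = (1 + a − b)/2. -/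
/-- The system `(1+h)s² − (1+2h)s + (1+a)h = 0`,
`(1+h)s² − s + bh = 0` has a common solution `s ∈ (h/(1+h), 1/2]`
iff `0 ≤ b − a < 1` and `h = (1 − (a−b)²)/(1 + (a−b)² + 2(a+b))`;
in that case the common solution is `s = (1 + a − b)/2`. -/
theorem stmt4 (h a b : ℝ) (hh : h ∈ Set.Ioo (0 : ℝ) 1) (ha : 0 < a) (hb : 0 < b) :
    ((∃ s : ℝ, h / (1 + h) < s ∧ s ≤ 1 / 2 ∧
        (1 + h) * s ^ 2 - (1 + 2 * h) * s + (1 + a) * h = 0 ∧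
        (1 + h) * s ^ 2 - s + b * h = 0) ↔
      (0 ≤ b - a ∧ b - a < 1 ∧
        h = (1 - (a - b) ^ 2) / (1 + (a - b) ^ 2 + 2 * (a + b)))) ∧
    (∀ s : ℝ, h / (1 + h) < s → s ≤ 1 / 2 →
      (1 + h) * s ^ 2 - (1 + 2 * h) * s + (1 + a) * h = 0 →
      (1 + h) * s ^ 2 - s + b * h = 0 → s = (1 + a - b) / 2) := by
  obtain ⟨hh0, hh1⟩ := hh
  have h1h : (0:ℝ) < 1 + h := by linarith
  have hD : (0:ℝ) < 1 + (a - b) ^ 2 + 2 * (a + b) := by positivity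
  have hsval : ∀ s : ℝ,
      (1 + h) * s ^ 2 - (1 + 2 * h) * s + (1 + a) * h = 0 →
      (1 + h) * s ^ 2 - s + b * h = 0 → s = (1 + a - b) / 2 := by
    intro s e1 e2
    have key : h * (1 + a - b - 2 * s) = 0 := by linear_combination e1 - e2
    rcases mul_eq_zero.mp key with h0 | h0
    · exact absurd h0 (ne_of_gt hh0)
    · linarith
  constructor
  · constructor
    · rintro ⟨s, hs1, hs2, e1, e2⟩
      have hs := hsval s e1 e2
      have hspos : 0 < s := lt_trans (div_pos hh0 h1h) hs1
      refine ⟨by rw [hs] at hs2; linarith, by rw [hs] at hspos; linarith, ?_⟩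
      rw [hs] at e2
      rw [eq_div_iff (ne_of_gt hD)]
      linear_combination (4 : ℝ) * e2
    · rintro ⟨h1, h2, h3⟩
      have hDh : h * (1 + (a - b) ^ 2 + 2 * (a + b)) = 1 - (a - b) ^ 2 := by
        rw [h3]; field_simp
      refine ⟨(1 + a - b) / 2, ?_, by linarith, ?_, ?_⟩
      · rw [div_lt_iff₀ h1h]
        nlinarith [mul_pos (show (0:ℝ) < 1 + (a - b) by linarith) (show (0:ℝ) < 4 * a by linarith), sq_nonneg (a - b)]
      · linear_combination (1/4 : ℝ) * hDh
      · linear_combination (1/4 : ℝ) * hDh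
  · intro s _ _ e1 e2
    exact hsval s e1 e2
end

section
/- Let h ∈ (0,1), s ∈ (0,1), ρ ∈ [0, π/2] and ρ̃ ∈ [−π/2, π/2) be real numbers such that the complex equation (1−h) + (1+h)·s·e^{2iρ} + (1+h)·(1−s)·e^{2iρ̃} = 0 holds. Then: if ρ = 0 then ρ̃ = −π/2; if ρ = π/2 then ρ̃ = 0; and otherwise ρ̃ = arctan(−1/(h·tan ρ)). In particular ρ̃ ∈ [−π/2, 0]. -/
open Real

/-- Lemma 4 of the paper: if
`(1−h) + (1+h)·s·e^{2iρ} + (1+h)·(1−s)·e^{2iρ̃} = 0` with `h ∈ (0,1)`,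
`s ∈ (0,1)`, `ρ ∈ [0, π/2]` and `ρ̃ ∈ [−π/2, π/2)`, then `ρ̃` is determined
as stated, and in particular `ρ̃ ∈ [−π/2, 0]`. -/
theorem stmt5 (h s ρ ρ' : ℝ) (hh : h ∈ Set.Ioo (0 : ℝ) 1) (hs : s ∈ Set.Ioo (0 : ℝ) 1)
    (hρ : ρ ∈ Set.Icc 0 (π / 2)) (hρ' : ρ' ∈ Set.Ico (-(π / 2)) (π / 2))
    (heq : ((1 - h : ℝ) : ℂ) + (((1 + h) * s : ℝ) : ℂ) * Complex.exp (2 * ρ * Complex.I)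
        + (((1 + h) * (1 - s) : ℝ) : ℂ) * Complex.exp (2 * ρ' * Complex.I) = 0) :
    (ρ = 0 → ρ' = -(π / 2)) ∧
    (ρ = π / 2 → ρ' = 0) ∧
    (ρ ≠ 0 → ρ ≠ π / 2 → ρ' = Real.arctan (-1 / (h * Real.tan ρ))) ∧
    ρ' ∈ Set.Icc (-(π / 2)) 0 := by
  obtain ⟨hh0, hh1⟩ := hh
  obtain ⟨hs0, hs1⟩ := hs
  obtain ⟨hρ0, hρ1⟩ := hρ
  obtain ⟨hρ'0, hρ'1⟩ := hρ'
  have hπ := Real.pi_pos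
  set a : ℝ := (1 + h) * s with ha_def
  set b : ℝ := (1 + h) * (1 - s) with hb_def
  have ha : 0 < a := mul_pos (by linarith) hs0
  have hb : 0 < b := mul_pos (by linarith) (by linarith)
  have hab : a + b = 1 + h := by rw [ha_def, hb_def]; ring
  -- rewrite the exponentials
  have hexp : ∀ x : ℝ, Complex.exp (2 * (x : ℂ) * Complex.I)
      = ((Real.cos (2 * x) : ℝ) : ℂ) + ((Real.sin (2 * x) : ℝ) : ℂ) * Complex.I := by
    intro x
    rw [show (2 * (x : ℂ)) = (((2 * x : ℝ)) : ℂ) by push_cast; ring, Complex.exp_mul_I,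
      Complex.ofReal_cos, Complex.ofReal_sin]
  rw [hexp ρ, hexp ρ'] at heq
  rw [Complex.ext_iff] at heq
  simp only [Complex.add_re, Complex.add_im, Complex.mul_re, Complex.mul_im,
    Complex.ofReal_re, Complex.ofReal_im, Complex.I_re, Complex.I_im, Complex.zero_re,
    Complex.zero_im, mul_zero, zero_mul, mul_one, sub_zero, zero_sub, add_zero, zero_add,
    neg_zero] at heq
  obtain ⟨hre0, him0⟩ := heq
  have hre : 1 - h + a * Real.cos (2 * ρ) + b * Real.cos (2 * ρ') = 0 := by
    linear_combination hre0
  have him : a * Real.sin (2 * ρ) + b * Real.sin (2 * ρ') = 0 := by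
    linear_combination him0
  -- pythagorean identities
  have p1 : Real.sin (2 * ρ') ^ 2 + Real.cos (2 * ρ') ^ 2 = 1 := Real.sin_sq_add_cos_sq _
  have p2big : Real.sin (2 * ρ) ^ 2 + Real.cos (2 * ρ) ^ 2 = 1 := Real.sin_sq_add_cos_sq _
  -- the key constraint on a
  have hsq : (1 - h + a * Real.cos (2 * ρ)) ^ 2 + (a * Real.sin (2 * ρ)) ^ 2 = b ^ 2 := by
    linear_combination (1 - h + a * Real.cos (2 * ρ) - b * Real.cos (2 * ρ')) * hre
      + (a * Real.sin (2 * ρ) - b * Real.sin (2 * ρ')) * him + b ^ 2 * p1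
  have hkey : 2 * h = a * (1 + h) + a * (1 - h) * Real.cos (2 * ρ) := by
    linear_combination (-1 / 2) * hsq + (a ^ 2 / 2) * p2big - ((1 + h - a + b) / 2) * hab
  by_cases h0 : ρ = 0
  · -- case ρ = 0
    have hC : Real.cos (2 * ρ) = 1 := by rw [h0]; simp
    rw [hC] at hkey hre
    have haeq : a = h := by linear_combination (-1 / 2) * hkey
    have hb1 : b = 1 := by linarith
    rw [haeq, hb1] at hre
    have hC' : Real.cos (2 * ρ') = -1 := by linarith
    have h2 : Real.cos (2 * ρ' + π) = 1 := by
      rw [Real.cos_add]; simp [hC']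
    have h3 : 2 * ρ' + π = 0 :=
      (Real.cos_eq_one_iff_of_lt_of_lt (by linarith) (by linarith)).mp h2
    have hans : ρ' = -(π / 2) := by linarith
    refine ⟨fun _ => hans, fun hc => by rw [h0] at hc; exfalso; linarith,
      fun hne _ => absurd h0 hne, ?_⟩
    rw [hans]
    exact ⟨le_refl _, by linarith⟩
  by_cases h1 : ρ = π / 2
  · -- case ρ = π / 2
    have hC : Real.cos (2 * ρ) = -1 := by
      rw [h1, show 2 * (π / 2) = π by ring, Real.cos_pi]
    rw [hC] at hkey hre
    have hza : h * (1 - a) = 0 := by linear_combination (1 / 2) * hkey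
    have haeq : a = 1 := by
      rcases mul_eq_zero.mp hza with h' | h'
      · exfalso; linarith
      · linarith
    have hbh : b = h := by linarith
    rw [haeq, hbh] at hre
    have hC' : Real.cos (2 * ρ') = 1 := by
      have hmul : h * Real.cos (2 * ρ') = h * 1 := by linarith
      exact mul_left_cancel₀ (ne_of_gt hh0) hmul
    have h3 : 2 * ρ' = 0 :=
      (Real.cos_eq_one_iff_of_lt_of_lt (by linarith) (by linarith)).mp hC'
    have hans : ρ' = 0 := by linarith
    refine ⟨fun hc => by exfalso; rw [hc] at h1; linarith, fun _ => hans,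
      fun _ hne => absurd h1 hne, ?_⟩
    rw [hans]
    exact ⟨by linarith, le_refl _⟩
  · -- general case: 0 < ρ < π/2
    have hρpos : 0 < ρ := lt_of_le_of_ne hρ0 (Ne.symm h0)
    have hρlt : ρ < π / 2 := lt_of_le_of_ne hρ1 h1
    have hS2pos : 0 < Real.sin (2 * ρ) :=
      Real.sin_pos_of_pos_of_lt_pi (by linarith) (by linarith)
    have hsinρ : 0 < Real.sin ρ := Real.sin_pos_of_pos_of_lt_pi (by linarith) (by linarith)
    have hcosρ : 0 < Real.cos ρ := Real.cos_pos_of_mem_Ioo ⟨by linarith, hρlt⟩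
    -- sin (2ρ') < 0
    have hS' : Real.sin (2 * ρ') < 0 := by
      by_contra hcon
      push_neg at hcon
      have h4 : 0 ≤ b * Real.sin (2 * ρ') := mul_nonneg hb.le hcon
      have h5 : 0 < a * Real.sin (2 * ρ) := mul_pos ha hS2pos
      linarith
    -- ρ' ∈ (-(π/2), 0)
    have hρ'neg : ρ' < 0 := by
      by_contra hcon
      push_neg at hcon
      have := Real.sin_nonneg_of_nonneg_of_le_pi (x := 2 * ρ') (by linarith) (by linarith)
      linarith
    have hρ'lt : -(π / 2) < ρ' := by
      rcases lt_or_eq_of_le hρ'0 with hlt | heqq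
      · exact hlt
      · exfalso
        rw [← heqq, show 2 * -(π / 2) = -π by ring] at hS'
        simp [Real.sin_neg, Real.sin_pi] at hS'
    have hcosρ' : 0 < Real.cos ρ' := Real.cos_pos_of_mem_Ioo ⟨hρ'lt, by linarith⟩
    -- double angle rewrites
    have hc2' : Real.cos (2 * ρ') = 2 * Real.cos ρ' ^ 2 - 1 := Real.cos_two_mul _
    have hc2 : Real.cos (2 * ρ) = 2 * Real.cos ρ ^ 2 - 1 := Real.cos_two_mul _
    have hs2' : Real.sin (2 * ρ') = 2 * Real.sin ρ' * Real.cos ρ' := Real.sin_two_mul _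
    have hs2 : Real.sin (2 * ρ) = 2 * Real.sin ρ * Real.cos ρ := Real.sin_two_mul _
    have hp2 : Real.sin ρ ^ 2 + Real.cos ρ ^ 2 = 1 := Real.sin_sq_add_cos_sq _
    -- step 1 and 2
    have step1 : b * (1 + Real.cos (2 * ρ')) = 2 * h - a * (1 + Real.cos (2 * ρ)) := by
      linear_combination hab + hre
    have step2 : b * (1 + Real.cos (2 * ρ')) = a * h * (1 - Real.cos (2 * ρ)) := by
      linear_combination step1 + hkey
    have eqA : b * Real.cos ρ' ^ 2 = a * h * Real.sin ρ ^ 2 := by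
      linear_combination (1 / 2) * step2 - (b / 2) * hc2' - (a * h / 2) * hc2 - a * h * hp2
    have eqB : b * (Real.sin ρ' * Real.cos ρ') = -(a * (Real.sin ρ * Real.cos ρ)) := by
      linear_combination (1 / 2) * him - (a / 2) * hs2 - (b / 2) * hs2'
    have hz : b * Real.cos ρ' * (h * Real.sin ρ * Real.sin ρ' + Real.cos ρ * Real.cos ρ') = 0 := by
      linear_combination h * Real.sin ρ * eqB + Real.cos ρ * eqA
    have keyid : h * Real.sin ρ * Real.sin ρ' + Real.cos ρ * Real.cos ρ' = 0 :=
      (mul_eq_zero.mp hz).resolve_left (ne_of_gt (mul_pos hb hcosρ'))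
    have htan : Real.tan ρ' = -1 / (h * Real.tan ρ) := by
      rw [Real.tan_eq_sin_div_cos, Real.tan_eq_sin_div_cos]
      have h1' : Real.cos ρ' ≠ 0 := ne_of_gt hcosρ'
      have h2' : Real.cos ρ ≠ 0 := ne_of_gt hcosρ
      have h3' : Real.sin ρ ≠ 0 := ne_of_gt hsinρ
      have h4' : h ≠ 0 := ne_of_gt hh0
      field_simp
      first
        | linear_combination keyid
        | linear_combination -keyid
        | linear_combination Real.cos ρ * Real.cos ρ' * keyid
        | nlinarith [keyid, mul_pos hcosρ hcosρ', mul_pos hh0 hsinρ]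
    have hans : ρ' = Real.arctan (-1 / (h * Real.tan ρ)) := by
      rw [← htan, Real.arctan_tan hρ'lt hρ'1]
    exact ⟨fun hc => absurd hc h0, fun hc => absurd hc h1, fun _ _ => hans,
      ⟨hρ'0, hρ'neg.le⟩⟩
end

section
/- Let h ∈ (0,1), ρ ∈ [0, π/2], ρ̃ ∈ [−π/2, π/2), and s ∈ ℝ, and set t = tan(ρ/2). Then (1−h) + (1+h)·s·e^{2iρ} + (1+h)·(1−s)·e^{2iρ̃} = 0 (as an equation in ℂ) holds if and only if s ∈ [h/(1+h), 1/(1+h)] and: t = 0 and ρ̃ = −π/2 when s = h/(1+h); t = 1 and ρ̃ = 0 when s = 1/(1+h); and otherwise tan ρ̃ = −1/(h·tan ρ) and t = (√(s(1−h²)) − √(h(1−s−hs)))/√(s−h+hs). -/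
/-!
Multiplying the balancing equation by `e^{-i(ρ+ρ')}` makes it linear in the unit vector
`(cos ρ', sin ρ')`, so its determinant `p cos² ρ - h q sin² ρ` vanishes, where
`p = (1+h)s - h` and `q = 1 - (1+h)s`. This forces `p, q ≥ 0`; for `p q ≠ 0` it determines
`tan (ρ/2)` as the nonnegative root of a quadratic and then `tan ρ'` from the first equation,
while `p = 0` and `q = 0` are the degenerate configurations `ρ = 0` and `ρ = π/2`.
-/

open Real Set

theorem tan_half_inj {x y : ℝ} (hx : x ∈ Ioo (-π) π) (hy : y ∈ Ioo (-π) π) :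
    tan (x / 2) = tan (y / 2) ↔ x = y := by
  rw [injOn_tan.eq_iff ⟨by linarith [hx.1], by linarith [hx.2]⟩
    ⟨by linarith [hy.1], by linarith [hy.2]⟩, div_left_inj' two_ne_zero]

theorem mul_cos_sq_eq_mul_sin_sq_iff_tan_half {a b x : ℝ} (ha : 0 ≤ a) (hb : 0 < b)
    (hx : x ∈ Icc 0 (π / 2)) :
    b * cos x ^ 2 = a * sin x ^ 2 ↔ tan (x / 2) = (√(b + a) - √a) / √b := by
  obtain ⟨hx₀, hx₁⟩ := hx
  have hcos_nonneg : 0 ≤ cos x := cos_nonneg_of_mem_Icc ⟨by linarith [pi_pos], hx₁⟩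
  have hsin_nonneg : 0 ≤ sin x := sin_nonneg_of_nonneg_of_le_pi hx₀ (by linarith [pi_pos])
  have hsq : b * cos x ^ 2 = a * sin x ^ 2 ↔ √b * cos x = √a * sin x := by
    rw [← sq_eq_sq₀ (mul_nonneg (sqrt_nonneg b) hcos_nonneg)
      (mul_nonneg (sqrt_nonneg a) hsin_nonneg), mul_pow, mul_pow, sq_sqrt ha, sq_sqrt hb.le]
  set t := tan (x / 2)
  have ht : 0 ≤ t := tan_nonneg_of_nonneg_of_le_pi_div_two (by linarith) (by linarith)
  rw [hsq, cos_eq_two_mul_tan_half_div_one_sub_tan_half_sq x (by linarith),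
    sin_eq_two_mul_tan_half_div_one_add_tan_half_sq x]
  have hu : √(b + a) ^ 2 = √a ^ 2 + √b ^ 2 := by
    rw [sq_sqrt ha, sq_sqrt hb.le, sq_sqrt (by linarith)]; ring
  set u := √(b + a)
  set v := √a
  set w := √b
  have hw : 0 < w := sqrt_pos.2 hb
  -- `w * cos x = v * sin x` is a quadratic equation in `t` with roots `(± u - v) / w`.
  have hfactor : w * ((1 - t ^ 2) / (1 + t ^ 2)) = v * (2 * t / (1 + t ^ 2)) ↔
      (w * t - (u - v)) * (w * t + u + v) = 0 := by
    rw [mul_div_assoc', mul_div_assoc', div_left_inj' (by positivity)]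
    constructor <;> intro e
    · linear_combination -w * e - hu
    · apply mul_left_cancel₀ hw.ne'
      linear_combination -e - hu
  rw [hfactor, mul_eq_zero, or_iff_left (by positivity), sub_eq_zero, eq_div_iff hw.ne', mul_comm]

open Complex in
theorem ofReal_add_mul_exp_add_mul_exp_eq_zero_iff (a b c x y : ℝ) :
    (a : ℂ) + b * exp (2 * x * I) + c * exp (2 * y * I) = 0 ↔
      (a + b + c) * Real.cos x * Real.cos y + (b + c - a) * Real.sin x * Real.sin y = 0 ∧
      (b - c - a) * Real.sin x * Real.cos y = (a + b - c) * Real.cos x * Real.sin y := by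
  have hrot : (a : ℂ) + b * exp (2 * x * I) + c * exp (2 * y * I) = exp ((x + y) * I) *
      (a * exp (-((x + y) * I)) + b * exp ((x - y) * I) + c * exp ((y - x) * I)) := by
    simp only [mul_add, mul_left_comm (exp ((x + y) * I)), ← Complex.exp_add]
    ring_nf
    simp
  rw [hrot, mul_eq_zero, or_iff_right (Complex.exp_ne_zero _), Complex.ext_iff]
  simp only [add_re, add_im, mul_re, mul_im, sub_re, sub_im, neg_re, neg_im, ofReal_re, ofReal_im,
    I_re, I_im, zero_re, zero_im, exp_re, exp_im, Real.exp_zero, Real.cos_add, Real.cos_sub,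
    Real.sin_add, Real.sin_sub, Real.cos_neg, Real.sin_neg, mul_zero, mul_one, zero_mul, one_mul,
    add_zero, sub_zero, sub_self, neg_zero, mul_neg, neg_mul, neg_neg, neg_add_rev]
  refine and_congr ⟨fun e => ?_, fun e => ?_⟩ ⟨fun e => ?_, fun e => ?_⟩ <;> linear_combination e

-- For `a = 1 - h`, `b = (1+h)s`, `c = (1+h)(1-s)`, `p = (1+h)s - h` and `q = 1 - (1+h)s`,
-- the real part of `e^{-i(ρ+ρ')}(a + b e^{2iρ} + c e^{2iρ'})` is twice the first expression
-- and its imaginary part `-2` times the second.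
def BalancingAngles (h p q ρ ρ' : ℝ) : Prop :=
  cos ρ * cos ρ' + h * sin ρ * sin ρ' = 0 ∧ q * sin ρ * cos ρ' + p * cos ρ * sin ρ' = 0

theorem balancing_eq_zero_iff_balancingAngles (h s ρ ρ' : ℝ) :
    ((1 - h : ℝ) : ℂ) + (((1 + h) * s : ℝ) : ℂ) * Complex.exp (2 * ρ * Complex.I)
        + (((1 + h) * (1 - s) : ℝ) : ℂ) * Complex.exp (2 * ρ' * Complex.I) = 0 ↔
      BalancingAngles h ((1 + h) * s - h) (1 - (1 + h) * s) ρ ρ' := by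
  rw [ofReal_add_mul_exp_add_mul_exp_eq_zero_iff]
  exact and_congr ⟨fun e => by linear_combination e / 2, fun e => by linear_combination 2 * e⟩
    ⟨fun e => by linear_combination -e / 2, fun e => by linear_combination -2 * e⟩

section BalancingAngles

variable {h p q ρ ρ' : ℝ}

-- The determinant of the system, viewed as linear in the unit vector `(cos ρ', sin ρ')`, vanishes.
theorem BalancingAngles.mul_cos_sq_eq (hb : BalancingAngles h p q ρ ρ') :
    p * cos ρ ^ 2 = h * q * sin ρ ^ 2 := by
  obtain ⟨e₁, e₂⟩ := hb
  linear_combination (p * cos ρ * cos ρ' - q * sin ρ * sin ρ') * e₁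
    + (cos ρ * sin ρ' - h * sin ρ * cos ρ') * e₂
    - (p * cos ρ ^ 2 - h * q * sin ρ ^ 2) * sin_sq_add_cos_sq ρ'

theorem BalancingAngles.nonneg (hh : 0 < h) (hpq : 0 < p + q) (hb : BalancingAngles h p q ρ ρ') :
    0 ≤ p ∧ 0 ≤ q := by
  have e := hb.mul_cos_sq_eq
  have hone := sin_sq_add_cos_sq ρ
  constructor
  · by_contra! hp
    have hhq : 0 < h * q := mul_pos hh (by linarith)
    have hS : sin ρ ^ 2 = 0 := by nlinarith [sq_nonneg (sin ρ), sq_nonneg (cos ρ)]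
    nlinarith
  · by_contra! hq
    have hp : 0 < p := by linarith
    have hhq : h * q < 0 := mul_neg_of_pos_of_neg hh hq
    have hC : cos ρ ^ 2 = 0 := by nlinarith [sq_nonneg (sin ρ), sq_nonneg (cos ρ)]
    nlinarith

theorem balancingAngles_zero_left_iff (hh : h ≠ 0) (hq : q ≠ 0) (hρ : ρ ∈ Icc 0 (π / 2))
    (hρ' : ρ' ∈ Ico (-(π / 2)) (π / 2)) :
    BalancingAngles h 0 q ρ ρ' ↔ ρ = 0 ∧ ρ' = -(π / 2) := by
  obtain ⟨hρ₀, hρ₁⟩ := hρ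
  obtain ⟨hρ'₀, hρ'₁⟩ := hρ'
  constructor
  · intro hb
    have hsin : sin ρ = 0 := by simpa [hh, hq] using hb.mul_cos_sq_eq
    obtain rfl : ρ = 0 := (sin_eq_zero_iff_of_lt_of_lt (by linarith) (by linarith)).1 hsin
    have hcos : cos ρ' = 0 := by simpa using hb.1
    refine ⟨rfl, by_contra fun hne => ?_⟩
    exact (cos_pos_of_mem_Ioo ⟨lt_of_le_of_ne hρ'₀ (Ne.symm hne), hρ'₁⟩).ne' hcos
  · rintro ⟨rfl, rfl⟩
    simp [BalancingAngles]

theorem balancingAngles_zero_right_iff (hh : h ≠ 0) (hp : p ≠ 0) (hρ : ρ ∈ Icc 0 (π / 2))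
    (hρ' : ρ' ∈ Ico (-(π / 2)) (π / 2)) :
    BalancingAngles h p 0 ρ ρ' ↔ ρ = π / 2 ∧ ρ' = 0 := by
  obtain ⟨hρ₀, hρ₁⟩ := hρ
  obtain ⟨hρ'₀, hρ'₁⟩ := hρ'
  constructor
  · intro hb
    have hcos : cos ρ = 0 := by simpa [hp] using hb.mul_cos_sq_eq
    obtain rfl : ρ = π / 2 := by_contra fun hne =>
      (cos_pos_of_mem_Ioo ⟨by linarith [pi_pos], lt_of_le_of_ne hρ₁ hne⟩).ne' hcos
    have hsin : sin ρ' = 0 := by simpa [hh] using hb.1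
    exact ⟨rfl, (sin_eq_zero_iff_of_lt_of_lt (by linarith) (by linarith)).1 hsin⟩
  · rintro ⟨rfl, rfl⟩
    simp [BalancingAngles]

theorem balancingAngles_iff_of_ne_zero (hh : h ≠ 0) (hp : p ≠ 0) (hq : q ≠ 0) :
    BalancingAngles h p q ρ ρ' ↔
      p * cos ρ ^ 2 = h * q * sin ρ ^ 2 ∧ tan ρ' = -1 / (h * tan ρ) := by
  have cos_sin_ne_zero (e : p * cos ρ ^ 2 = h * q * sin ρ ^ 2) : cos ρ ≠ 0 ∧ sin ρ ≠ 0 := by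
    have hone := sin_sq_add_cos_sq ρ
    refine ⟨fun h0 => mul_ne_zero hh hq ?_, fun h0 => hp ?_⟩
    · linear_combination -(h * q) * hone - e + (p + h * q) * cos ρ * h0
    · linear_combination -p * hone + e + (p + h * q) * sin ρ * h0
  constructor
  · intro hb
    have e := hb.mul_cos_sq_eq
    obtain ⟨hc, hs⟩ := cos_sin_ne_zero e
    have hc' : cos ρ' ≠ 0 := by
      intro h0
      have : sin ρ' = 0 := by simpa [h0, hh, hs] using hb.1
      simpa [h0, this] using sin_sq_add_cos_sq ρ'
    refine ⟨e, ?_⟩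
    rw [tan_eq_sin_div_cos, tan_eq_sin_div_cos]
    field_simp
    linear_combination hb.1
  · rintro ⟨e, ht⟩
    obtain ⟨hc, hs⟩ := cos_sin_ne_zero e
    rw [tan_eq_sin_div_cos, tan_eq_sin_div_cos] at ht
    have hc' : cos ρ' ≠ 0 := by
      intro h0
      rw [h0, div_zero] at ht
      field_simp at ht
      simp [hc] at ht
    field_simp at ht
    have e₁ : cos ρ * cos ρ' + h * sin ρ * sin ρ' = 0 := by linear_combination ht
    refine ⟨e₁, ?_⟩
    have : h * sin ρ * (q * sin ρ * cos ρ' + p * cos ρ * sin ρ') = 0 := by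
      linear_combination (p * cos ρ) * e₁ - cos ρ' * e
    exact (mul_eq_zero.1 this).resolve_left (mul_ne_zero hh hs)

theorem balancingAngles_iff_tan (hh : 0 < h) (hp : 0 < p) (hq : 0 < q) (hρ : ρ ∈ Icc 0 (π / 2)) :
    BalancingAngles h p q ρ ρ' ↔
      tan ρ' = -1 / (h * tan ρ) ∧ tan (ρ / 2) = (√(p + h * q) - √(h * q)) / √p := by
  rw [balancingAngles_iff_of_ne_zero hh.ne' hp.ne' hq.ne',
    mul_cos_sq_eq_mul_sin_sq_iff_tan_half (mul_pos hh hq).le hp hρ, and_comm]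

theorem balancingAngles_iff (hh : 0 < h) (hpq : 0 < p + q) (hρ : ρ ∈ Icc 0 (π / 2))
    (hρ' : ρ' ∈ Ico (-(π / 2)) (π / 2)) :
    BalancingAngles h p q ρ ρ' ↔
      0 ≤ p ∧ 0 ≤ q ∧ (p = 0 → tan (ρ / 2) = 0 ∧ ρ' = -(π / 2)) ∧
        (q = 0 → tan (ρ / 2) = 1 ∧ ρ' = 0) ∧
        (p ≠ 0 → q ≠ 0 →
          tan ρ' = -1 / (h * tan ρ) ∧ tan (ρ / 2) = (√(p + h * q) - √(h * q)) / √p) := by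
  have hρ_mem : ρ ∈ Ioo (-π) π := ⟨by linarith [hρ.1, pi_pos], by linarith [hρ.2, pi_pos]⟩
  have htan_zero : tan (ρ / 2) = 0 ↔ ρ = 0 := by
    simpa using tan_half_inj hρ_mem ⟨neg_neg_of_pos pi_pos, pi_pos⟩
  have htan_one : tan (ρ / 2) = 1 ↔ ρ = π / 2 := by
    rw [← tan_half_inj hρ_mem ⟨by linarith [pi_pos], by linarith [pi_pos]⟩,
      div_div, show (2 : ℝ) * 2 = 4 by norm_num, tan_pi_div_four]
  rcases lt_or_ge p 0 with hp | hp
  · exact iff_of_false (fun hb => (hb.nonneg hh hpq).1.not_gt hp) fun H => H.1.not_gt hp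
  rcases lt_or_ge q 0 with hq | hq
  · exact iff_of_false (fun hb => (hb.nonneg hh hpq).2.not_gt hq) fun H => H.2.1.not_gt hq
  rcases hp.eq_or_lt with rfl | hp
  · rw [balancingAngles_zero_left_iff hh.ne' (by linarith) hρ hρ', htan_zero]
    simp [hq, (by linarith : q ≠ 0)]
  rcases hq.eq_or_lt with rfl | hq
  · rw [balancingAngles_zero_right_iff hh.ne' hp.ne' hρ hρ', htan_one]
    simp [hp.le, hp.ne']
  · rw [balancingAngles_iff_tan hh hp hq hρ]
    simp [hp.le, hq.le, hp.ne', hq.ne']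

end BalancingAngles

/-- Lemma 5 of the paper: with `t = tan(ρ/2)`, the balancing
equation `(1−h) + (1+h)·s·e^{2iρ} + (1+h)·(1−s)·e^{2iρ̃} = 0` holds iff
`s ∈ [h/(1+h), 1/(1+h)]` and `t`, `ρ̃` are as described. -/
theorem stmt6 (h ρ ρ' s : ℝ) (hh : h ∈ Set.Ioo (0 : ℝ) 1)
    (hρ : ρ ∈ Set.Icc 0 (π / 2)) (hρ' : ρ' ∈ Set.Ico (-(π / 2)) (π / 2)) :
    (((1 - h : ℝ) : ℂ) + (((1 + h) * s : ℝ) : ℂ) * Complex.exp (2 * ρ * Complex.I)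
        + (((1 + h) * (1 - s) : ℝ) : ℂ) * Complex.exp (2 * ρ' * Complex.I) = 0) ↔
    (h / (1 + h) ≤ s ∧ s ≤ 1 / (1 + h) ∧
      (s = h / (1 + h) → Real.tan (ρ / 2) = 0 ∧ ρ' = -(π / 2)) ∧
      (s = 1 / (1 + h) → Real.tan (ρ / 2) = 1 ∧ ρ' = 0) ∧
      (s ≠ h / (1 + h) → s ≠ 1 / (1 + h) →
        Real.tan ρ' = -1 / (h * Real.tan ρ) ∧
        Real.tan (ρ / 2) =
          (Real.sqrt (s * (1 - h ^ 2)) - Real.sqrt (h * (1 - s - h * s)))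
            / Real.sqrt (s - h + h * s))) := by
  obtain ⟨hh₀, hh₁⟩ := hh
  have h1h : 0 < 1 + h := by linarith
  have hp : h / (1 + h) ≤ s ↔ 0 ≤ (1 + h) * s - h := by rw [div_le_iff₀ h1h, sub_nonneg, mul_comm]
  have hq : s ≤ 1 / (1 + h) ↔ 0 ≤ 1 - (1 + h) * s := by rw [le_div_iff₀ h1h, sub_nonneg, mul_comm]
  have hp₀ : s = h / (1 + h) ↔ (1 + h) * s - h = 0 := by
    rw [eq_div_iff h1h.ne', sub_eq_zero, mul_comm]
  have hq₀ : s = 1 / (1 + h) ↔ 1 - (1 + h) * s = 0 := by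
    rw [eq_div_iff h1h.ne', sub_eq_zero, eq_comm, mul_comm]
  rw [hp, hq, ne_eq, ne_eq, hp₀, hq₀,
    show s * (1 - h ^ 2) = ((1 + h) * s - h) + h * (1 - (1 + h) * s) by ring,
    show 1 - s - h * s = 1 - (1 + h) * s by ring, show s - h + h * s = (1 + h) * s - h by ring]
  refine (balancing_eq_zero_iff_balancingAngles h s ρ ρ').trans
    (balancingAngles_iff hh₀ ?_ hρ hρ')
  linarith
end

section
/- Let h ∈ (0,1) and s ∈ (h/(1+h), 1/2]. Let ρ ∈ (0, π/2) be the angle with tan(ρ/2) = (√(s(1−h²)) − √(h(1−s−hs)))/√(s−h+hs), and let ρ̃ ∈ (−π/2, 0) be the angle with tan ρ̃ = −1/(h·tan ρ). Then sin ρ̃ / sin ρ = −√( s(1−s−hs) / ((1−s)(s−h+hs)) ) and −√((1+h)/(1−h)) · (sin ρ̃/sin ρ) · (1 + h·tan²ρ) · cos ρ = √( h / ((1−s)(s−h+hs)) ). -/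
open Real


private lemma aux_pyth (x B C A : ℝ) (hB : B ≠ 0)
    (hpy : (C / B * x) ^ 2 + x ^ 2 = 1) (hA2 : A ^ 2 = B ^ 2 + C ^ 2) :
    x ^ 2 * A ^ 2 = B ^ 2 := by
  field_simp at hpy
  linear_combination hpy + x ^ 2 * hA2

private lemma aux_final1 (A B C D : ℝ) (hA : A ≠ 0) (hC : C ≠ 0) (hD : D ≠ 0) :
    -(B / D) / (C / A) = -(A * B / (D * C)) := by
  field_simp

private lemma aux_final2 (A B C D E k : ℝ) (hA : A ≠ 0) (hB : B ≠ 0) (hC : C ≠ 0)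
    (hD : D ≠ 0) :
    -E * (-(B / D) / (C / A)) * (k / B ^ 2) * (B / A) = E * k / (C * D) := by
  field_simp

private lemma aux_eq_div (x P Q : ℝ) (hx : 0 ≤ x) (hP : 0 ≤ P) (hQ : 0 < Q)
    (hsq : x ^ 2 * Q ^ 2 = P ^ 2) : x = P / Q := by
  have h1 : x ^ 2 = (P / Q) ^ 2 := by
    rw [div_pow, eq_div_iff (pow_ne_zero 2 hQ.ne')]; exact hsq
  calc x = Real.sqrt (x ^ 2) := (Real.sqrt_sq hx).symm
    _ = Real.sqrt ((P / Q) ^ 2) := by rw [h1]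
    _ = P / Q := Real.sqrt_sq (by positivity)

/-- closed forms for `A = sin ρ̃ / sin ρ` and
`B = −√((1+h)/(1−h))·A·(1 + h·tan²ρ)·cos ρ` in terms of `s` and `h`. -/
theorem stmt7 (h s : ℝ) (hh : h ∈ Set.Ioo (0 : ℝ) 1)
    (hs1 : h / (1 + h) < s) (hs2 : s ≤ 1 / 2)
    (ρ ρ' : ℝ) (hρ : ρ ∈ Set.Ioo 0 (π / 2))
    (htρ : Real.tan (ρ / 2) =
      (Real.sqrt (s * (1 - h ^ 2)) - Real.sqrt (h * (1 - s - h * s)))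
        / Real.sqrt (s - h + h * s))
    (hρ' : ρ' ∈ Set.Ioo (-(π / 2)) 0)
    (htρ' : Real.tan ρ' = -1 / (h * Real.tan ρ)) :
    Real.sin ρ' / Real.sin ρ
        = -Real.sqrt (s * (1 - s - h * s) / ((1 - s) * (s - h + h * s))) ∧
    -Real.sqrt ((1 + h) / (1 - h)) * (Real.sin ρ' / Real.sin ρ)
        * (1 + h * (Real.tan ρ) ^ 2) * Real.cos ρ
      = Real.sqrt (h / ((1 - s) * (s - h + h * s))) := by
  obtain ⟨hh0, hh1⟩ := hh
  obtain ⟨hρ0, hρ2⟩ := hρ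
  obtain ⟨hρ'1, hρ'2⟩ := hρ'
  have hs0 : 0 < s := lt_trans (div_pos hh0 (by linarith)) hs1
  have hss : h < s * (1 + h) := (div_lt_iff₀ (by linarith)).mp hs1
  have hb2 : 0 < h * (1 - s - h * s) := by nlinarith
  have hc2 : 0 < s - h + h * s := by nlinarith
  have ha2 : 0 < s * (1 - h ^ 2) := by nlinarith
  have h1s : 0 < 1 - s := by nlinarith
  have h1h : 0 < 1 - h := by linarith
  have h1h' : 0 < 1 + h := by linarith
  have hd2 : 0 < h * (1 - s) * (1 - h ^ 2) := by nlinarith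
  set A := Real.sqrt (s * (1 - h ^ 2)) with hAdef
  set B := Real.sqrt (h * (1 - s - h * s)) with hBdef
  set C := Real.sqrt (s - h + h * s) with hCdef
  set D := Real.sqrt (h * (1 - s) * (1 - h ^ 2)) with hDdef
  have hA2 : A ^ 2 = s * (1 - h ^ 2) := Real.sq_sqrt ha2.le
  have hB2 : B ^ 2 = h * (1 - s - h * s) := Real.sq_sqrt hb2.le
  have hC2 : C ^ 2 = s - h + h * s := Real.sq_sqrt hc2.le
  have hD2 : D ^ 2 = h * (1 - s) * (1 - h ^ 2) := Real.sq_sqrt hd2.le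
  have hApos : 0 < A := Real.sqrt_pos.mpr ha2
  have hBpos : 0 < B := Real.sqrt_pos.mpr hb2
  have hCpos : 0 < C := Real.sqrt_pos.mpr hc2
  have hDpos : 0 < D := Real.sqrt_pos.mpr hd2
  have hAB : B < A := by
    rw [hAdef, hBdef]
    apply Real.sqrt_lt_sqrt hb2.le
    nlinarith
  have hABne : A - B ≠ 0 := sub_ne_zero.mpr hAB.ne'
  -- tan ρ = C / B
  have htan : Real.tan ρ = C / B := by
    have h2 : Real.tan ρ = 2 * Real.tan (ρ / 2) / (1 - Real.tan (ρ / 2) ^ 2) := by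
      rw [← Real.tan_two_mul]; ring_nf
    rw [h2, htρ]
    have hden : 1 - ((A - B) / C) ^ 2 = 2 * B * (A - B) / C ^ 2 := by
      rw [div_pow, eq_div_iff (pow_ne_zero 2 hCpos.ne'), sub_mul,
        div_mul_cancel₀ _ (pow_ne_zero 2 hCpos.ne')]
      linear_combination hC2 - hA2 + hB2
    rw [hden, div_eq_div_iff (by positivity) hBpos.ne']
    field_simp
  have hcosρ : 0 < Real.cos ρ := Real.cos_pos_of_mem_Ioo ⟨by linarith [Real.pi_pos], hρ2⟩
  have hsinρ : 0 < Real.sin ρ := Real.sin_pos_of_pos_of_lt_pi hρ0 (by linarith [Real.pi_pos])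
  have hcosρ' : 0 < Real.cos ρ' := Real.cos_pos_of_mem_Ioo ⟨hρ'1, by linarith [Real.pi_pos]⟩
  have hpy : Real.sin ρ ^ 2 + Real.cos ρ ^ 2 = 1 := Real.sin_sq_add_cos_sq ρ
  have hpy' : Real.sin ρ' ^ 2 + Real.cos ρ' ^ 2 = 1 := Real.sin_sq_add_cos_sq ρ'
  have hsc : Real.sin ρ = C / B * Real.cos ρ := by
    rw [← htan, Real.tan_eq_sin_div_cos, div_mul_cancel₀ _ hcosρ.ne']
  have hcosval : Real.cos ρ = B / A := by
    refine aux_eq_div _ _ _ hcosρ.le hBpos.le hApos ?_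
    refine aux_pyth _ B C A hBpos.ne' ?_ (by linear_combination hA2 - hB2 - hC2)
    rw [← hsc]; exact hpy
  have hsinval : Real.sin ρ = C / A := by
    rw [hsc, hcosval]; field_simp
  have htan' : Real.tan ρ' = -B / (h * C) := by
    rw [htρ', htan]; field_simp
  have hsc' : Real.sin ρ' = -B / (h * C) * Real.cos ρ' := by
    rw [← htan', Real.tan_eq_sin_div_cos, div_mul_cancel₀ _ hcosρ'.ne']
  have hcos'val : Real.cos ρ' = h * C / D := by
    refine aux_eq_div _ _ _ hcosρ'.le (by positivity) hDpos ?_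
    refine aux_pyth _ (h * C) (-B) D (by positivity) ?_
      (by linear_combination hD2 - h ^ 2 * hC2 - hB2)
    have : -B / (h * C) = -B / (h * C) := rfl
    rw [show (-B / (h * C) : ℝ) = -B / (h * C) from rfl] at hsc'
    rw [← hsc']
    exact hpy' 
  have hsin'val : Real.sin ρ' = -(B / D) := by
    rw [hsc', hcos'val]; field_simp
  have hsqrt1 : Real.sqrt (s * (1 - s - h * s) / ((1 - s) * (s - h + h * s)))
      = A * B / (D * C) := by
    have key : (A * B / (D * C)) ^ 2 = s * (1 - s - h * s) / ((1 - s) * (s - h + h * s)) := by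
      rw [div_pow, mul_pow, mul_pow, hA2, hB2, hC2, hD2,
        div_eq_div_iff (by positivity) (by positivity)]
      ring
    rw [← key, Real.sqrt_sq (by positivity)]
  set E := Real.sqrt ((1 + h) / (1 - h)) with hEdef
  have hE2 : E ^ 2 = (1 + h) / (1 - h) := Real.sq_sqrt (by positivity)
  have hEpos : 0 < E := Real.sqrt_pos.mpr (by positivity)
  have hsqrt2 : Real.sqrt (h / ((1 - s) * (s - h + h * s)))
      = E * (h * (1 - h)) / (C * D) := by
    have key : (E * (h * (1 - h)) / (C * D)) ^ 2 = h / ((1 - s) * (s - h + h * s)) := by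
      rw [div_pow, mul_pow E _, mul_pow C D, hE2, hC2, hD2,
        div_eq_div_iff (by positivity) (by positivity)]
      field_simp
      ring
    rw [← key, Real.sqrt_sq (by positivity)]
  have hfac : 1 + h * (Real.tan ρ) ^ 2 = h * (1 - h) / B ^ 2 := by
    rw [htan, div_pow, eq_div_iff (pow_ne_zero 2 hBpos.ne')]
    field_simp
    linear_combination hB2 + h * hC2
  constructor
  · rw [hsin'val, hsinval, hsqrt1]
    exact aux_final1 A B C D hApos.ne' hCpos.ne' hDpos.ne'
  · rw [hsin'val, hsinval, hcosval, hfac, hsqrt2]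
    exact aux_final2 A B C D E (h * (1 - h)) hApos.ne' hBpos.ne' hCpos.ne' hDpos.ne'
end

section
/- Let a, b be positive real numbers with 0 ≤ b − a < 1, set h = (1 − (a−b)²)/(1 + (a−b)² + 2(a+b)) and t = (√((1+a+b)((a−b)² + a + b)) − √b·(1−a+b)) / √(a·(1 + (a−b)² + 2(a+b))). Then: (i) 2t/(1+t²) = √( a(1 + (a−b)² + 2(a+b)) / ((1+a+b)((a−b)² + a + b)) ); (ii) (1−t²)/(1+t²) = √( b / ((1+a+b)((a−b)² + a + b)) )·(1−a+b); (iii) (t²−1)/√((1−t²)² + 4h²t²) = −√( b(1 + (a−b)² + 2(a+b)) / ((1+a+b)((a−b)² + a + b)) ); (iv) 2ht/√((1−t²)² + 4h²t²) = √( a / ((1+a+b)((a−b)² + a + b)) )·(1+a−b). -/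
/-!
Put `R = 1 + (a - b)² + 2(a + b)` and `P = (1 + a + b)((a - b)² + a + b)`. The right-hand sides
of (i) and (ii) are the sine and cosine of an angle `ρ`, because `a R + b (1 - a + b)² = P`, and
`t = (1 - cos ρ) / sin ρ = tan (ρ / 2)`; so (i) and (ii) are the half-angle formulas. Moreover
`(1 - t²)² + 4 h² t² = (1 + t²)² (cos² ρ + h² sin² ρ)`, and `cos² ρ + h² sin² ρ = (1 - a + b)² / R`
because `1 - (a - b)² = (1 - a + b)(1 + a - b)` and `b R + a (1 + a - b)² = P`; this gives
(iii) and (iv).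
-/

lemma sqrt_one_sub_sq_sq_add_eq (h t : ℝ) :
    √((1 - t ^ 2) ^ 2 + 4 * h ^ 2 * t ^ 2)
      = (1 + t ^ 2) * √(((1 - t ^ 2) / (1 + t ^ 2)) ^ 2 + h ^ 2 * (2 * t / (1 + t ^ 2)) ^ 2) := by
  have ht : 0 < 1 + t ^ 2 := by positivity
  rw [← Real.sqrt_sq ht.le, ← Real.sqrt_mul (sq_nonneg _), Real.sqrt_sq ht.le]
  congr 1
  field_simp
  ring

section HalfAngle

variable {s c t : ℝ}

lemma one_sub_ne_zero_of_sq_add_sq_eq_one (hsc : c ^ 2 + s ^ 2 = 1) (hc : c ≠ 0) :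
    1 - s ≠ 0 := by
  intro hs
  have : c ^ 2 = 0 := by linear_combination hsc + (1 + s) * hs
  exact hc (pow_eq_zero_iff two_ne_zero |>.mp this)

lemma one_add_sq_eq_of_eq_one_sub_div (hsc : c ^ 2 + s ^ 2 = 1) (hc : c ≠ 0)
    (ht : t = (1 - s) / c) : 1 + t ^ 2 = 2 * (1 - s) / c ^ 2 := by
  subst ht
  field_simp
  linear_combination hsc

lemma two_mul_div_one_add_sq_eq_of_eq_one_sub_div (hsc : c ^ 2 + s ^ 2 = 1) (hc : c ≠ 0)
    (ht : t = (1 - s) / c) : 2 * t / (1 + t ^ 2) = c := by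
  have hs := one_sub_ne_zero_of_sq_add_sq_eq_one hsc hc
  rw [one_add_sq_eq_of_eq_one_sub_div hsc hc ht, ht]
  field_simp

lemma one_sub_sq_div_one_add_sq_eq_of_eq_one_sub_div (hsc : c ^ 2 + s ^ 2 = 1) (hc : c ≠ 0)
    (ht : t = (1 - s) / c) : (1 - t ^ 2) / (1 + t ^ 2) = s := by
  have hs := one_sub_ne_zero_of_sq_add_sq_eq_one hsc hc
  rw [one_add_sq_eq_of_eq_one_sub_div hsc hc ht, ht]
  field_simp
  linear_combination hsc

lemma sub_one_div_sqrt_eq_of_eq_one_sub_div (h : ℝ) (hsc : c ^ 2 + s ^ 2 = 1) (hc : c ≠ 0)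
    (ht : t = (1 - s) / c) :
    (t ^ 2 - 1) / √((1 - t ^ 2) ^ 2 + 4 * h ^ 2 * t ^ 2) = -s / √(s ^ 2 + h ^ 2 * c ^ 2) := by
  have hcos := one_sub_sq_div_one_add_sq_eq_of_eq_one_sub_div hsc hc ht
  have hsin := two_mul_div_one_add_sq_eq_of_eq_one_sub_div hsc hc ht
  have hnum : (t ^ 2 - 1) / (1 + t ^ 2) = -s := by rw [← hcos]; ring
  rw [sqrt_one_sub_sq_sq_add_eq, div_mul_eq_div_div, hnum, hcos, hsin]

lemma two_mul_mul_div_sqrt_eq_of_eq_one_sub_div (h : ℝ) (hsc : c ^ 2 + s ^ 2 = 1) (hc : c ≠ 0)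
    (ht : t = (1 - s) / c) :
    2 * h * t / √((1 - t ^ 2) ^ 2 + 4 * h ^ 2 * t ^ 2) = h * c / √(s ^ 2 + h ^ 2 * c ^ 2) := by
  have hcos := one_sub_sq_div_one_add_sq_eq_of_eq_one_sub_div hsc hc ht
  have hsin := two_mul_div_one_add_sq_eq_of_eq_one_sub_div hsc hc ht
  have hnum : 2 * h * t / (1 + t ^ 2) = h * c := by rw [← hsin]; ring
  rw [sqrt_one_sub_sq_sq_add_eq, div_mul_eq_div_div, hnum, hcos, hsin]

end HalfAngle

namespace BiharmonicTorus

variable {a b : ℝ}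

noncomputable def sinRho (a b : ℝ) : ℝ :=
  √(a * (1 + (a - b) ^ 2 + 2 * (a + b)) / ((1 + a + b) * ((a - b) ^ 2 + a + b)))

noncomputable def cosRho (a b : ℝ) : ℝ :=
  √(b / ((1 + a + b) * ((a - b) ^ 2 + a + b))) * (1 - a + b)

lemma sinRho_pos (ha : 0 < a) (hb : 0 < b) : 0 < sinRho a b :=
  Real.sqrt_pos.2 (by positivity)

lemma sinRho_sq_add_cosRho_sq (ha : 0 < a) (hb : 0 < b) :
    sinRho a b ^ 2 + cosRho a b ^ 2 = 1 := by
  rw [sinRho, cosRho, mul_pow, Real.sq_sqrt (by positivity), Real.sq_sqrt (by positivity)]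
  field_simp
  ring

lemma one_sub_cosRho_div_sinRho (ha : 0 < a) (hb : 0 < b) :
    (1 - cosRho a b) / sinRho a b
      = (√((1 + a + b) * ((a - b) ^ 2 + a + b)) - √b * (1 - a + b))
        / √(a * (1 + (a - b) ^ 2 + 2 * (a + b))) := by
  have hP : 0 < (1 + a + b) * ((a - b) ^ 2 + a + b) := by positivity
  rw [sinRho, cosRho, Real.sqrt_div' _ hP.le, Real.sqrt_div' _ hP.le]
  field_simp [(Real.sqrt_pos.2 hP).ne']

noncomputable def hParam (a b : ℝ) : ℝ :=
  (1 - (a - b) ^ 2) / (1 + (a - b) ^ 2 + 2 * (a + b))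

lemma sqrt_cosRho_sq_add_hParam_sq_mul_sinRho_sq (ha : 0 < a) (hb : 0 < b) (hab : 0 ≤ b - a) :
    √(cosRho a b ^ 2 + hParam a b ^ 2 * sinRho a b ^ 2)
      = (1 - a + b) / √(1 + (a - b) ^ 2 + 2 * (a + b)) := by
  have hR : 0 < 1 + (a - b) ^ 2 + 2 * (a + b) := by positivity
  have hd : 0 < 1 - a + b := by linarith
  rw [← Real.sqrt_sq (div_pos hd (Real.sqrt_pos.2 hR)).le]
  congr 1
  rw [sinRho, cosRho, hParam, mul_pow, Real.sq_sqrt (by positivity), Real.sq_sqrt (by positivity),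
    div_pow (1 - a + b), Real.sq_sqrt hR.le]
  field_simp
  ring

lemma cosRho_div_sqrt_eq (ha : 0 < a) (hb : 0 < b) (hab : 0 ≤ b - a) :
    cosRho a b / √(cosRho a b ^ 2 + hParam a b ^ 2 * sinRho a b ^ 2)
      = √(b * (1 + (a - b) ^ 2 + 2 * (a + b)) / ((1 + a + b) * ((a - b) ^ 2 + a + b))) := by
  have hP : 0 < (1 + a + b) * ((a - b) ^ 2 + a + b) := by positivity
  have hd : 0 < 1 - a + b := by linarith
  rw [sqrt_cosRho_sq_add_hParam_sq_mul_sinRho_sq ha hb hab, cosRho, Real.sqrt_div' _ hP.le,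
    Real.sqrt_div' _ hP.le, Real.sqrt_mul hb.le]
  field_simp

lemma hParam_mul_sinRho_div_sqrt_eq (ha : 0 < a) (hb : 0 < b) (hab : 0 ≤ b - a) :
    hParam a b * sinRho a b / √(cosRho a b ^ 2 + hParam a b ^ 2 * sinRho a b ^ 2)
      = √(a / ((1 + a + b) * ((a - b) ^ 2 + a + b))) * (1 + a - b) := by
  have hP : 0 < (1 + a + b) * ((a - b) ^ 2 + a + b) := by positivity
  have hR : 0 < 1 + (a - b) ^ 2 + 2 * (a + b) := by positivity
  have hd : 0 < 1 - a + b := by linarith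
  rw [sqrt_cosRho_sq_add_hParam_sq_mul_sinRho_sq ha hb hab, hParam, sinRho,
    Real.sqrt_div' _ hP.le, Real.sqrt_div' _ hP.le, Real.sqrt_mul ha.le]
  field_simp
  rw [Real.sq_sqrt hR.le]
  ring

end BiharmonicTorus

open BiharmonicTorus in
theorem stmt9_general (a b : ℝ) (ha : 0 < a) (hb : 0 < b)
    (hab1 : 0 ≤ b - a)
    (h t : ℝ)
    (hdef : h = (1 - (a - b) ^ 2) / (1 + (a - b) ^ 2 + 2 * (a + b)))
    (tdef : t = (Real.sqrt ((1 + a + b) * ((a - b) ^ 2 + a + b))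
        - Real.sqrt b * (1 - a + b)) / Real.sqrt (a * (1 + (a - b) ^ 2 + 2 * (a + b)))) :
    2 * t / (1 + t ^ 2)
        = Real.sqrt (a * (1 + (a - b) ^ 2 + 2 * (a + b))
            / ((1 + a + b) * ((a - b) ^ 2 + a + b))) ∧
    (1 - t ^ 2) / (1 + t ^ 2)
        = Real.sqrt (b / ((1 + a + b) * ((a - b) ^ 2 + a + b))) * (1 - a + b) ∧
    (t ^ 2 - 1) / Real.sqrt ((1 - t ^ 2) ^ 2 + 4 * h ^ 2 * t ^ 2)
        = -Real.sqrt (b * (1 + (a - b) ^ 2 + 2 * (a + b))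
            / ((1 + a + b) * ((a - b) ^ 2 + a + b))) ∧
    2 * h * t / Real.sqrt ((1 - t ^ 2) ^ 2 + 4 * h ^ 2 * t ^ 2)
        = Real.sqrt (a / ((1 + a + b) * ((a - b) ^ 2 + a + b))) * (1 + a - b) := by
  change h = hParam a b at hdef
  subst hdef
  have hsc := sinRho_sq_add_cosRho_sq ha hb
  have hsin := (sinRho_pos ha hb).ne'
  have ht : t = (1 - cosRho a b) / sinRho a b := tdef.trans (one_sub_cosRho_div_sinRho ha hb).symm
  refine ⟨two_mul_div_one_add_sq_eq_of_eq_one_sub_div hsc hsin ht,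
    one_sub_sq_div_one_add_sq_eq_of_eq_one_sub_div hsc hsin ht, ?_, ?_⟩
  · rw [sub_one_div_sqrt_eq_of_eq_one_sub_div _ hsc hsin ht, neg_div,
      cosRho_div_sqrt_eq ha hb hab1]
  · rw [two_mul_mul_div_sqrt_eq_of_eq_one_sub_div _ hsc hsin ht,
      hParam_mul_sinRho_div_sqrt_eq ha hb hab1]

/-- the four identities giving `sin ρ`, `cos ρ`, `sin ρ̃`, `cos ρ̃`
in terms of the rational parameters `a`, `b`. -/
theorem stmt9 (a b : ℝ) (ha : 0 < a) (hb : 0 < b)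
    (hab1 : 0 ≤ b - a) (hab2 : b - a < 1)
    (h t : ℝ)
    (hdef : h = (1 - (a - b) ^ 2) / (1 + (a - b) ^ 2 + 2 * (a + b)))
    (tdef : t = (Real.sqrt ((1 + a + b) * ((a - b) ^ 2 + a + b))
        - Real.sqrt b * (1 - a + b)) / Real.sqrt (a * (1 + (a - b) ^ 2 + 2 * (a + b)))) :
    2 * t / (1 + t ^ 2)
        = Real.sqrt (a * (1 + (a - b) ^ 2 + 2 * (a + b))
            / ((1 + a + b) * ((a - b) ^ 2 + a + b))) ∧
    (1 - t ^ 2) / (1 + t ^ 2)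
        = Real.sqrt (b / ((1 + a + b) * ((a - b) ^ 2 + a + b))) * (1 - a + b) ∧
    (t ^ 2 - 1) / Real.sqrt ((1 - t ^ 2) ^ 2 + 4 * h ^ 2 * t ^ 2)
        = -Real.sqrt (b * (1 + (a - b) ^ 2 + 2 * (a + b))
            / ((1 + a + b) * ((a - b) ^ 2 + a + b))) ∧
    2 * h * t / Real.sqrt ((1 - t ^ 2) ^ 2 + 4 * h ^ 2 * t ^ 2)
        = Real.sqrt (a / ((1 + a + b) * ((a - b) ^ 2 + a + b))) * (1 + a - b) :=
  stmt9_general a b ha hb hab1 h t hdef tdef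
end

section
/- Let h ∈ (0, 1/2]. Define the complex numbers μ₁ = √((1−2h)/(2(1−h))) + i/√(2(1−h)), η₁ = √((1+2h)/(2(1+h))) + i/√(2(1+h)), η₂ = conjugate of η₁, and the real numbers R'₁ = (1 − √((1−2h)/(1+2h)))/2 and R'₂ = (1 + √((1−2h)/(1+2h)))/2. Then |μ₁| = 1, |η₁| = 1, η₁ ≠ η₂ and η₁ ≠ −η₂ when h < 1/2, R'₁ > 0, R'₂ > 0, R'₁ + R'₂ = 1, and (1−h)·μ₁² + (1+h)·(R'₁·η₁² + R'₂·η₂²) = 0. -/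
/-- the data `(m, m') = (1, 2)`, `R₁ = 1`, verifying the
conditions of the structure theorem for CMC proper-biharmonic planes
in `S⁵` (rectangular tori case). -/
theorem stmt10 (h : ℝ) (hh : h ∈ Set.Ioc (0 : ℝ) (1 / 2))
    (μ₁ η₁ η₂ : ℂ) (R'₁ R'₂ : ℝ)
    (hμ₁ : μ₁ = (Real.sqrt ((1 - 2 * h) / (2 * (1 - h))) : ℝ)
        + Complex.I * (1 / Real.sqrt (2 * (1 - h)) : ℝ))
    (hη₁ : η₁ = (Real.sqrt ((1 + 2 * h) / (2 * (1 + h))) : ℝ)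
        + Complex.I * (1 / Real.sqrt (2 * (1 + h)) : ℝ))
    (hη₂ : η₂ = starRingEnd ℂ η₁)
    (hR'₁ : R'₁ = (1 - Real.sqrt ((1 - 2 * h) / (1 + 2 * h))) / 2)
    (hR'₂ : R'₂ = (1 + Real.sqrt ((1 - 2 * h) / (1 + 2 * h))) / 2) :
    ‖μ₁‖ = 1 ∧ ‖η₁‖ = 1 ∧
    (h < 1 / 2 → η₁ ≠ η₂ ∧ η₁ ≠ -η₂) ∧
    0 < R'₁ ∧ 0 < R'₂ ∧ R'₁ + R'₂ = 1 ∧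
    ((1 - h : ℝ) : ℂ) * μ₁ ^ 2
      + ((1 + h : ℝ) : ℂ) * ((R'₁ : ℂ) * η₁ ^ 2 + (R'₂ : ℂ) * η₂ ^ 2) = 0 := by
  obtain ⟨h0, h12⟩ := hh
  have h1 : (0:ℝ) < 1 - h := by linarith
  have h2 : (0:ℝ) ≤ 1 - 2*h := by linarith
  have h3 : (0:ℝ) < 1 + 2*h := by linarith
  have h4 : (0:ℝ) < 1 + h := by linarith
  set a := Real.sqrt ((1 - 2*h)/(2*(1-h))) with ha
  set b := 1 / Real.sqrt (2*(1-h)) with hb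
  set c := Real.sqrt ((1+2*h)/(2*(1+h))) with hc
  set d := 1 / Real.sqrt (2*(1+h)) with hd
  set s := Real.sqrt ((1-2*h)/(1+2*h)) with hs
  have ha2 : a^2 = (1-2*h)/(2*(1-h)) := Real.sq_sqrt (div_nonneg h2 (by positivity))
  have hb2 : b^2 = 1/(2*(1-h)) := by
    rw [hb, div_pow, one_pow, Real.sq_sqrt (by positivity)]
  have hc2 : c^2 = (1+2*h)/(2*(1+h)) := Real.sq_sqrt (div_nonneg h3.le (by positivity))
  have hd2 : d^2 = 1/(2*(1+h)) := by
    rw [hd, div_pow, one_pow, Real.sq_sqrt (by positivity)]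
  have hs2 : s^2 = (1-2*h)/(1+2*h) := Real.sq_sqrt (div_nonneg h2 h3.le)
  have hs0 : 0 ≤ s := Real.sqrt_nonneg _
  have hab : a * b = Real.sqrt (1-2*h) / (2*(1-h)) := by
    rw [ha, hb, one_div, ← Real.sqrt_inv, ← Real.sqrt_mul (div_nonneg h2 (by positivity))]
    rw [show (1-2*h)/(2*(1-h)) * (2*(1-h))⁻¹ = (1-2*h) / (2*(1-h))^2 by
      rw [div_eq_mul_inv, div_eq_mul_inv, mul_assoc, ← mul_inv, ← sq]]
    rw [Real.sqrt_div h2, Real.sqrt_sq (by positivity)]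
  have hcd : c * d = Real.sqrt (1+2*h) / (2*(1+h)) := by
    rw [hc, hd, one_div, ← Real.sqrt_inv, ← Real.sqrt_mul (div_nonneg h3.le (by positivity))]
    rw [show (1+2*h)/(2*(1+h)) * (2*(1+h))⁻¹ = (1+2*h) / (2*(1+h))^2 by
      rw [div_eq_mul_inv, div_eq_mul_inv, mul_assoc, ← mul_inv, ← sq]]
    rw [Real.sqrt_div h3.le, Real.sqrt_sq (by positivity)]
  have hkey : s * Real.sqrt (1+2*h) = Real.sqrt (1-2*h) := by
    rw [hs, ← Real.sqrt_mul (div_nonneg h2 h3.le), div_mul_cancel₀ _ h3.ne']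
  have hab1 : a^2 + b^2 = 1 := by
    rw [ha2, hb2]; field_simp; ring
  have hcd1 : c^2 + d^2 = 1 := by
    rw [hc2, hd2]; field_simp; ring
  have habs1 : ‖μ₁‖ = 1 := by
    have hn : Complex.normSq μ₁ = 1 := by
      rw [hμ₁]; rw [Complex.normSq_apply]; simp
      linear_combination hab1
    rw [Complex.norm_def, hn, Real.sqrt_one]
  have habs2 : ‖η₁‖ = 1 := by
    have hn : Complex.normSq η₁ = 1 := by
      rw [hη₁]; rw [Complex.normSq_apply]; simp
      linear_combination hcd1
    rw [Complex.norm_def, hn, Real.sqrt_one]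
  have hs1 : s < 1 := by
    have hlt : s^2 < 1 := by rw [hs2, div_lt_one h3]; linarith
    nlinarith
  refine ⟨habs1, habs2, ?_, by rw [hR'₁]; linarith, by rw [hR'₂]; linarith,
    by rw [hR'₁, hR'₂]; ring, ?_⟩
  · intro hlt
    have hd0 : 0 < d := by rw [hd]; positivity
    have hc0 : 0 < c := Real.sqrt_pos.mpr (div_pos h3 (by positivity))
    have him : η₁.im = d := by rw [hη₁]; simp
    have hre : η₁.re = c := by rw [hη₁]; simp
    constructor
    · intro hEq
      have : η₁.im = -η₁.im := by
        conv_lhs => rw [hEq, hη₂]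
        simp
      rw [him] at this; linarith
    · intro hEq
      have : η₁.re = -η₁.re := by
        conv_lhs => rw [hEq, hη₂]
        simp
      rw [hre] at this; linarith
  · have hη₂' : η₂ = (c:ℂ) - Complex.I * (d:ℂ) := by
      rw [hη₂, hη₁, map_add, map_mul, Complex.conj_I, Complex.conj_ofReal,
        Complex.conj_ofReal]
      ring
    have sqf : ∀ x y : ℝ, ((x:ℂ) + Complex.I*(y:ℂ))^2
        = ((x^2-y^2 : ℝ):ℂ) + Complex.I*((2*x*y:ℝ):ℂ) := by
      intro x y; push_cast; linear_combination (y:ℂ)^2 * Complex.I_sq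
    have hμsq : μ₁^2 = ((a^2-b^2 : ℝ):ℂ) + Complex.I*((2*a*b:ℝ):ℂ) := by
      rw [hμ₁]; exact sqf a b
    have hη₁sq : η₁^2 = ((c^2-d^2 : ℝ):ℂ) + Complex.I*((2*c*d:ℝ):ℂ) := by
      rw [hη₁]; exact sqf c d
    have hη₂sq : η₂^2 = ((c^2-d^2 : ℝ):ℂ) - Complex.I*((2*c*d:ℝ):ℂ) := by
      rw [show η₂ = (c:ℂ) + Complex.I*((-d : ℝ):ℂ) by rw [hη₂']; push_cast; ring]
      rw [sqf c (-d)]; push_cast; ring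
    have hRR : R'₁ + R'₂ = 1 := by rw [hR'₁, hR'₂]; ring
    have hre0 : (1-h)*(a^2-b^2) + (1+h)*(R'₁*(c^2-d^2) + R'₂*(c^2-d^2)) = 0 := by
      have e4 : a^2 - b^2 = -h/(1-h) := by rw [ha2, hb2]; field_simp; ring
      have e5 : c^2 - d^2 = h/(1+h) := by rw [hc2, hd2]; field_simp; ring
      rw [e4, e5, show R'₁*(h/(1+h)) + R'₂*(h/(1+h)) = (R'₁+R'₂)*(h/(1+h)) by ring,
        hRR]
      field_simp
      ring
    have him0 : (1-h)*(2*a*b) + (1+h)*(R'₁*(2*c*d) - R'₂*(2*c*d)) = 0 := by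
      have e1 : (1-h)*(2*(a*b)) = Real.sqrt (1-2*h) := by
        rw [hab]; field_simp
      have e2 : (1+h)*(2*(c*d)) = Real.sqrt (1+2*h) := by
        rw [hcd]; field_simp
      have e3 : R'₁ - R'₂ = -s := by rw [hR'₁, hR'₂]; ring
      linear_combination e1 - s * e2 - hkey + (1+h)*(c*d)*2*e3
    rw [hμsq, hη₁sq, hη₂sq]
    have hreC' : ((1-h)*(a^2-b^2) + (1+h)*(R'₁*(c^2-d^2) + R'₂*(c^2-d^2)) : ℂ) = 0 := by
      exact_mod_cast congrArg (Complex.ofReal) hre0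
    have himC' : ((1-h)*(2*a*b) + (1+h)*(R'₁*(2*c*d) - R'₂*(2*c*d)) : ℂ) = 0 := by
      exact_mod_cast congrArg (Complex.ofReal) him0
    push_cast
    push_cast at hreC' himC'
    linear_combination hreC' + Complex.I * himC'
end

section
/- Let h ∈ (0, 1/2], and define μ₁ = √((1−2h)/(2(1−h))) + i/√(2(1−h)), μ₂ = conjugate of μ₁, and η₁ = √((1+2h)/(2(1+h))) + i/√(2(1+h)). Then there exist no real numbers R₁ > 0 and R₂ > 0 with R₁ + R₂ = 1 such that (1−h)·(R₁·μ₁² + R₂·μ₂²) + (1+h)·η₁² = 0. -/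
/-!
Only the imaginary part of the balancing condition is needed. For `z = x + i y` one has
`Im z² = 2xy`, and conjugation flips its sign, so the condition reads
`(R₁ - R₂) √(1 - 2h) + √(1 + 2h) = 0`. Since `R₁ - R₂ > -1` and `√(1 - 2h) < √(1 + 2h)`,
the left-hand side is positive.
-/

open Complex

theorem mul_im_sq_sqrt_div_add_I_mul_one_div_sqrt (a : ℝ) {c : ℝ} (hc : 0 < c) :
    c * ((((√(a / (2 * c)) : ℝ) : ℂ) + I * ((1 / √(2 * c) : ℝ) : ℂ)) ^ 2).im = √a := by
  have h2c : √(2 * c) ≠ 0 := by positivity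
  rw [Real.sqrt_div' a (by positivity)]
  simp only [sq, mul_im, add_re, add_im, ofReal_re, ofReal_im, mul_re, I_re, I_im]
  field_simp
  rw [Real.sq_sqrt (by positivity)]
  ring

theorem im_conj_sq (z : ℂ) : (starRingEnd ℂ z ^ 2).im = -(z ^ 2).im := by
  rw [← map_pow, conj_im]

/-- nonexistence in the case `(m, m') = (2, 1)`: the balancing
condition with `R'₁ = 1` has no solution with positive weights `R₁, R₂`. -/
theorem stmt12 (h : ℝ) (hh : h ∈ Set.Ioc (0 : ℝ) (1 / 2))
    (μ₁ μ₂ η₁ : ℂ)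
    (hμ₁ : μ₁ = (Real.sqrt ((1 - 2 * h) / (2 * (1 - h))) : ℝ)
        + Complex.I * (1 / Real.sqrt (2 * (1 - h)) : ℝ))
    (hμ₂ : μ₂ = starRingEnd ℂ μ₁)
    (hη₁ : η₁ = (Real.sqrt ((1 + 2 * h) / (2 * (1 + h))) : ℝ)
        + Complex.I * (1 / Real.sqrt (2 * (1 + h)) : ℝ)) :
    ¬ ∃ R₁ R₂ : ℝ, 0 < R₁ ∧ 0 < R₂ ∧ R₁ + R₂ = 1 ∧
      ((1 - h : ℝ) : ℂ) * ((R₁ : ℂ) * μ₁ ^ 2 + (R₂ : ℂ) * μ₂ ^ 2)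
        + ((1 + h : ℝ) : ℂ) * η₁ ^ 2 = 0 := by
  obtain ⟨hh0, hh2⟩ := hh
  rintro ⟨R₁, R₂, hR₁, hR₂, hsum, hbal⟩
  have him := congrArg Complex.im hbal
  simp only [hμ₂, add_im, im_ofReal_mul, im_conj_sq, zero_im] at him
  have hμ : (1 - h) * (μ₁ ^ 2).im = √(1 - 2 * h) :=
    hμ₁ ▸ mul_im_sq_sqrt_div_add_I_mul_one_div_sqrt _ (by linarith)
  have hη : (1 + h) * (η₁ ^ 2).im = √(1 + 2 * h) :=
    hη₁ ▸ mul_im_sq_sqrt_div_add_I_mul_one_div_sqrt _ (by linarith)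
  have hkey : (R₁ - R₂) * √(1 - 2 * h) + √(1 + 2 * h) = 0 := by
    linear_combination him - (R₁ - R₂) * hμ - hη
  have hlt : √(1 - 2 * h) < √(1 + 2 * h) := Real.sqrt_lt_sqrt (by linarith) (by linarith)
  nlinarith [mul_nonneg (by linarith : (0 : ℝ) ≤ R₁ - R₂ + 1) (Real.sqrt_nonneg (1 - 2 * h))]
end

section
/- Let h ∈ (0,1), λ₁ = 2(1−h), λ₂ = 2(1+h), let ρ ∈ (0, π/2) and let ρ̃ ∈ (−π/2, 0) satisfy tan ρ̃ = −1/(h·tan ρ). Set v₁ = (2π/(√λ₂·sin ρ), 0), v₂ = (−2π/(√λ₁·tan ρ), 2π/√λ₁), A = sin ρ̃ / sin ρ and B = −√(λ₂/λ₁)·A·(1 + h·tan²ρ)·cos ρ. Then a vector (T, V) ∈ ℝ² satisfies the three conditions √λ₁·V ∈ 2πℤ, √λ₂·(T·sin ρ + V·cos ρ) ∈ 2πℤ, and √λ₂·(T·sin ρ̃ + V·cos ρ̃) ∈ 2πℤ, if and only if there exist integers n and m with (T, V) = n·v₁ + m·v₂ and n·A + m·B ∈ ℤ. -/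
/-!
With `s₁ = √λ₁`, `s₂ = √λ₂`, the three conditions say that the linear functionals
`φ = s₂ (T sin ρ + V cos ρ) / 2π`, `ψ = s₁ V / 2π` and `χ = s₂ (T sin ρ' + V cos ρ') / 2π` are
integers. The vectors `v₁, v₂` form the basis dual to `φ, ψ`, so the first two conditions say
`(T, V) = n v₁ + m v₂` with `n, m ∈ ℤ`, and then `χ (T, V) = n χ(v₁) + m χ(v₂)`.
Here `χ(v₁) = A` directly, while `χ(v₂) = B` is where `tan ρ' = -1 / (h tan ρ)` enters, in the
form `cos ρ cos ρ' = -h sin ρ sin ρ'`.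
-/

open Real

theorem exists_int_forms_iff_of_dual_pair {R E : Type*} [Ring R] [AddCommGroup E] [Module R E]
    (φ ψ χ : E →ₗ[R] R) (v w : E) (hφv : φ v = 1) (hφw : φ w = 0) (hψv : ψ v = 0)
    (hψw : ψ w = 1) (hspan : ∀ x, φ x • v + ψ x • w = x) (x : E) :
    ((∃ n : ℤ, φ x = n) ∧ (∃ m : ℤ, ψ x = m) ∧ ∃ k : ℤ, χ x = k) ↔
      ∃ n m : ℤ, x = (n : R) • v + (m : R) • w ∧ ∃ k : ℤ, n * χ v + m * χ w = k := by
  constructor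
  · rintro ⟨⟨n, hn⟩, ⟨m, hm⟩, k, hk⟩
    have hx : x = (n : R) • v + (m : R) • w := by rw [← hn, ← hm, hspan]
    refine ⟨n, m, hx, k, ?_⟩
    rw [← hk, hx]
    simp
  · rintro ⟨n, m, rfl, k, hk⟩
    refine ⟨⟨n, ?_⟩, ⟨m, ?_⟩, k, ?_⟩ <;> simp [hφv, hφw, hψv, hψw, hk]

noncomputable def periodForm (a b : ℝ) : ℝ × ℝ →ₗ[ℝ] ℝ :=
  (2 * π)⁻¹ • (a • LinearMap.fst ℝ ℝ ℝ + b • LinearMap.snd ℝ ℝ ℝ)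

@[simp]
theorem periodForm_apply (a b : ℝ) (x : ℝ × ℝ) :
    periodForm a b x = (a * x.1 + b * x.2) / (2 * π) := by
  simp [periodForm]
  ring

theorem exists_int_periodForm_iff (a b : ℝ) (x : ℝ × ℝ) :
    (∃ k : ℤ, periodForm a b x = k) ↔ ∃ k : ℤ, a * x.1 + b * x.2 = 2 * π * k := by
  simp only [periodForm_apply, div_eq_iff (by positivity : 2 * π ≠ 0), mul_comm _ (2 * π)]

theorem two_pi_congruences_iff {s₁ s₂ ρ : ℝ} (hs₁ : s₁ ≠ 0) (hs₂ : s₂ ≠ 0) (hsin : sin ρ ≠ 0)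
    (a b T V : ℝ) :
    ((∃ m : ℤ, s₁ * V = 2 * π * m) ∧
      (∃ n : ℤ, s₂ * (T * sin ρ + V * cos ρ) = 2 * π * n) ∧
      (∃ k : ℤ, s₂ * (T * a + V * b) = 2 * π * k)) ↔
    ∃ n m : ℤ, (T, V) = (n : ℝ) • (2 * π / (s₂ * sin ρ), 0) +
        (m : ℝ) • (-(2 * π) / (s₁ * tan ρ), 2 * π / s₁) ∧
      ∃ k : ℤ, n * (a / sin ρ) + m * (s₂ / s₁ * (b - a * cos ρ / sin ρ)) = k := by
  have hdual := exists_int_forms_iff_of_dual_pair (periodForm (s₂ * sin ρ) (s₂ * cos ρ))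
    (periodForm 0 s₁) (periodForm (s₂ * a) (s₂ * b))
    (2 * π / (s₂ * sin ρ), 0) (-(2 * π) / (s₁ * tan ρ), 2 * π / s₁)
    (by simp only [periodForm_apply, mul_zero, add_zero]; field_simp)
    (by simp only [periodForm_apply, tan_eq_sin_div_cos]; field_simp; ring)
    (by simp only [periodForm_apply]; ring)
    (by simp only [periodForm_apply, zero_mul, zero_add]; field_simp)
    (fun x => by
      simp only [periodForm_apply, tan_eq_sin_div_cos]
      ext <;> simp <;> field_simp; ring)
    (T, V)
  have hχv : periodForm (s₂ * a) (s₂ * b) (2 * π / (s₂ * sin ρ), 0) = a / sin ρ := by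
    simp only [periodForm_apply, mul_zero, add_zero]
    field_simp
  have hχw : periodForm (s₂ * a) (s₂ * b) (-(2 * π) / (s₁ * tan ρ), 2 * π / s₁) =
      s₂ / s₁ * (b - a * cos ρ / sin ρ) := by
    simp only [periodForm_apply, tan_eq_sin_div_cos]
    field_simp
    ring
  rw [hχv, hχw, exists_int_periodForm_iff, exists_int_periodForm_iff,
    exists_int_periodForm_iff] at hdual
  rw [← hdual, and_left_comm]
  simp only [zero_mul, zero_add, mul_add, mul_assoc, mul_comm T, mul_comm V]

theorem cos_mul_cos_eq_of_tan_eq {h ρ ρ' : ℝ} (hh : h ≠ 0) (hsin : sin ρ ≠ 0)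
    (hcos' : cos ρ' ≠ 0) (htan : tan ρ' = -1 / (h * tan ρ)) :
    cos ρ * cos ρ' = -(h * sin ρ * sin ρ') := by
  rw [tan_eq_sin_div_cos, tan_eq_sin_div_cos] at htan
  field_simp at htan
  linarith

/-- description of the period lattice: `(T, V)` satisfies the
three congruence conditions iff `(T, V) = n·v₁ + m·v₂` for integers `n, m`
with `n·A + m·B ∈ ℤ`. -/
theorem stmt15 (h : ℝ) (hh : h ∈ Set.Ioo (0 : ℝ) 1)
    (ρ ρ' : ℝ) (hρ : ρ ∈ Set.Ioo 0 (π / 2)) (hρ' : ρ' ∈ Set.Ioo (-(π / 2)) 0)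
    (htan : Real.tan ρ' = -1 / (h * Real.tan ρ))
    (lam₁ lam₂ : ℝ) (hlam₁ : lam₁ = 2 * (1 - h)) (hlam₂ : lam₂ = 2 * (1 + h))
    (v₁ v₂ : ℝ × ℝ)
    (hv₁ : v₁ = (2 * π / (Real.sqrt lam₂ * Real.sin ρ), 0))
    (hv₂ : v₂ = (-(2 * π) / (Real.sqrt lam₁ * Real.tan ρ), 2 * π / Real.sqrt lam₁))
    (A B : ℝ)
    (hA : A = Real.sin ρ' / Real.sin ρ)
    (hB : B = -Real.sqrt (lam₂ / lam₁) * A * (1 + h * (Real.tan ρ) ^ 2) * Real.cos ρ)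
    (T V : ℝ) :
    ((∃ m : ℤ, Real.sqrt lam₁ * V = 2 * π * m) ∧
     (∃ n : ℤ, Real.sqrt lam₂ * (T * Real.sin ρ + V * Real.cos ρ) = 2 * π * n) ∧
     (∃ k : ℤ, Real.sqrt lam₂ * (T * Real.sin ρ' + V * Real.cos ρ') = 2 * π * k)) ↔
    (∃ n m : ℤ, (T, V) = (n : ℝ) • v₁ + (m : ℝ) • v₂ ∧
      ∃ k : ℤ, (n : ℝ) * A + (m : ℝ) * B = (k : ℝ)) := by
  obtain ⟨hh0, hh1⟩ := hh
  have hs₁ : √lam₁ ≠ 0 := (sqrt_pos.2 (by linarith)).ne'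
  have hs₂ : √lam₂ ≠ 0 := (sqrt_pos.2 (by linarith)).ne'
  have hsin : sin ρ ≠ 0 := (sin_pos_of_pos_of_lt_pi hρ.1 (by linarith [hρ.2, pi_pos])).ne'
  have hcos : cos ρ ≠ 0 := (cos_pos_of_mem_Ioo ⟨by linarith [hρ.1, pi_pos], hρ.2⟩).ne'
  have hcos' : cos ρ' ≠ 0 := (cos_pos_of_mem_Ioo ⟨hρ'.1, by linarith [hρ'.2, pi_pos]⟩).ne'
  have hB' : B = √lam₂ / √lam₁ * (cos ρ' - sin ρ' * cos ρ / sin ρ) := by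
    rw [hB, hA, sqrt_div' _ (by linarith), tan_eq_sin_div_cos]
    field_simp
    linear_combination -sin ρ * cos_mul_cos_eq_of_tan_eq hh0.ne' hsin hcos' htan
  rw [hv₁, hv₂, hA, hB']
  exact two_pi_congruences_iff hs₁ hs₂ hsin _ _ T V
end

section
/- Let q₁ and q₂ be natural numbers with 0 ≤ q₁ < q₂. Define the vectors in ℝ²: v₁ = ( π√2·√(3q₁² + q₂²)/(q₂ − q₁), 0 ), v₂ = ( −π√2·(q₁ + q₂)²/((q₂ − q₁)·√(3q₁² + q₂²)), 2π√(q₁² + q₂²)/√(3q₁² + q₂²) ), f̃₁ = ( 2π√2·q₁/√(3q₁² + q₂²), −2π√(q₁² + q₂²)/√(3q₁² + q₂²) ), and f̃₂ = ( π√2·(q₁² + q₂²)/√(3q₁² + q₂²), 2π·q₁·√(q₁² + q₂²)/√(3q₁² + q₂²) ). Then f̃₁ = −v₁ − v₂ and f̃₂ = q₂·v₁ + q₁·v₂. -/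
open Real

namespace Remark10

/- `v₁, v₂, f̃₁, f̃₂` with `q₁, q₂, √(3q₁² + q₂²), √(q₁² + q₂²)` replaced by free reals `a, b, s, r`;
only `s² = 3a² + b²` is needed. -/

noncomputable def periodGen₁ (a b s : ℝ) : ℝ × ℝ :=
  (π * Real.sqrt 2 * s / (b - a), 0)

noncomputable def periodGen₂ (a b s r : ℝ) : ℝ × ℝ :=
  (-(π * Real.sqrt 2 * (a + b) ^ 2) / ((b - a) * s), 2 * π * r / s)

noncomputable def rotatedGen₁ (a s r : ℝ) : ℝ × ℝ :=
  (2 * π * Real.sqrt 2 * a / s, -(2 * π * r) / s)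

noncomputable def rotatedGen₂ (a b s r : ℝ) : ℝ × ℝ :=
  (π * Real.sqrt 2 * (a ^ 2 + b ^ 2) / s, 2 * π * a * r / s)

variable {a b s : ℝ}

lemma ne_zero_of_sq_eq_three_mul_sq_add_sq (hab : a ≠ b) (hs : s ^ 2 = 3 * a ^ 2 + b ^ 2) :
    s ≠ 0 := by
  rintro rfl
  have ha : a = 0 := by nlinarith [sq_nonneg a, sq_nonneg b]
  have hb : b = 0 := by nlinarith [sq_nonneg a, sq_nonneg b]
  exact hab (ha.trans hb.symm)

/-- After clearing denominators the first coordinate is `2a(b - a) = (a + b)² - s²`. -/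
lemma rotatedGen₁_eq (hab : a ≠ b) (hs : s ^ 2 = 3 * a ^ 2 + b ^ 2) (r : ℝ) :
    rotatedGen₁ a s r = -periodGen₁ a b s - periodGen₂ a b s r := by
  have hba : b - a ≠ 0 := sub_ne_zero.mpr hab.symm
  have hs₀ := ne_zero_of_sq_eq_three_mul_sq_add_sq hab hs
  refine Prod.ext ?_ ?_
  · simp only [rotatedGen₁, periodGen₁, periodGen₂, Prod.fst_sub, Prod.fst_neg]
    field_simp
    linear_combination hs
  · simp only [rotatedGen₁, periodGen₁, periodGen₂, Prod.snd_sub, Prod.snd_neg]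
    ring

/-- After clearing denominators the first coordinate is `(a² + b²)(b - a) = b s² - a (a + b)²`. -/
lemma rotatedGen₂_eq (hab : a ≠ b) (hs : s ^ 2 = 3 * a ^ 2 + b ^ 2) (r : ℝ) :
    rotatedGen₂ a b s r = b • periodGen₁ a b s + a • periodGen₂ a b s r := by
  have hba : b - a ≠ 0 := sub_ne_zero.mpr hab.symm
  have hs₀ := ne_zero_of_sq_eq_three_mul_sq_add_sq hab hs
  refine Prod.ext ?_ ?_
  · simp only [rotatedGen₂, periodGen₁, periodGen₂, Prod.fst_add, Prod.smul_fst, smul_eq_mul]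
    field_simp
    linear_combination -b * hs
  · simp only [rotatedGen₂, periodGen₁, periodGen₂, Prod.snd_add, Prod.smul_snd, smul_eq_mul]
    ring

end Remark10

open Remark10 in
/-- Remark 10: the rotated lattice generators `f̃₁, f̃₂` are
integer combinations of the period lattice generators `v₁, v₂`:
`f̃₁ = −v₁ − v₂` and `f̃₂ = q₂·v₁ + q₁·v₂`. -/
theorem stmt18 (q₁ q₂ : ℕ) (hq : q₁ < q₂)
    (v₁ v₂ f₁ f₂ : ℝ × ℝ)
    (hv₁ : v₁ = (π * Real.sqrt 2 * Real.sqrt (3 * (q₁ : ℝ) ^ 2 + (q₂ : ℝ) ^ 2)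
        / ((q₂ : ℝ) - (q₁ : ℝ)), 0))
    (hv₂ : v₂ = (-(π * Real.sqrt 2 * ((q₁ : ℝ) + (q₂ : ℝ)) ^ 2)
        / (((q₂ : ℝ) - (q₁ : ℝ)) * Real.sqrt (3 * (q₁ : ℝ) ^ 2 + (q₂ : ℝ) ^ 2)),
        2 * π * Real.sqrt ((q₁ : ℝ) ^ 2 + (q₂ : ℝ) ^ 2)
        / Real.sqrt (3 * (q₁ : ℝ) ^ 2 + (q₂ : ℝ) ^ 2)))
    (hf₁ : f₁ = (2 * π * Real.sqrt 2 * (q₁ : ℝ)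
        / Real.sqrt (3 * (q₁ : ℝ) ^ 2 + (q₂ : ℝ) ^ 2),
        -(2 * π * Real.sqrt ((q₁ : ℝ) ^ 2 + (q₂ : ℝ) ^ 2))
        / Real.sqrt (3 * (q₁ : ℝ) ^ 2 + (q₂ : ℝ) ^ 2)))
    (hf₂ : f₂ = (π * Real.sqrt 2 * ((q₁ : ℝ) ^ 2 + (q₂ : ℝ) ^ 2)
        / Real.sqrt (3 * (q₁ : ℝ) ^ 2 + (q₂ : ℝ) ^ 2),
        2 * π * (q₁ : ℝ) * Real.sqrt ((q₁ : ℝ) ^ 2 + (q₂ : ℝ) ^ 2)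
        / Real.sqrt (3 * (q₁ : ℝ) ^ 2 + (q₂ : ℝ) ^ 2))) :
    f₁ = -v₁ - v₂ ∧ f₂ = (q₂ : ℝ) • v₁ + (q₁ : ℝ) • v₂ := by
  subst hv₁ hv₂ hf₁ hf₂
  have hne : (q₁ : ℝ) ≠ q₂ := Nat.cast_injective.ne hq.ne
  have hs : Real.sqrt (3 * (q₁ : ℝ) ^ 2 + (q₂ : ℝ) ^ 2) ^ 2 = 3 * (q₁ : ℝ) ^ 2 + (q₂ : ℝ) ^ 2 :=
    sq_sqrt (by positivity)
  exact ⟨rotatedGen₁_eq hne hs _, rotatedGen₂_eq hne hs _⟩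
end

section
/- Let h ∈ (0,1) and let s be a real number with h/(1+h) ≤ s ≤ 1/(1+h). Then there exist real numbers ρ ∈ [0, π/2] and ρ̃ ∈ [−π/2, 0] such that (1−h) + (1+h)·s·e^{2iρ} + (1+h)·(1−s)·e^{2iρ̃} = 0 in ℂ. -/
open Real

/-- existence direction of Lemma 5: for every
`s ∈ [h/(1+h), 1/(1+h)]` the balancing condition is solvable with
`ρ ∈ [0, π/2]` and `ρ̃ ∈ [−π/2, 0]`. -/
theorem stmt19 (h s : ℝ) (hh : h ∈ Set.Ioo (0 : ℝ) 1)
    (hs1 : h / (1 + h) ≤ s) (hs2 : s ≤ 1 / (1 + h)) :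
    ∃ ρ ρ' : ℝ, ρ ∈ Set.Icc 0 (π / 2) ∧ ρ' ∈ Set.Icc (-(π / 2)) 0 ∧
      ((1 - h : ℝ) : ℂ) + (((1 + h) * s : ℝ) : ℂ) * Complex.exp (2 * ρ * Complex.I)
        + (((1 + h) * (1 - s) : ℝ) : ℂ) * Complex.exp (2 * ρ' * Complex.I) = 0 := by
  obtain ⟨h0, h1⟩ := hh
  have hp : (0:ℝ) < 1 + h := by linarith
  set a : ℝ := (1 + h) * s with hadef
  set b : ℝ := (1 + h) * (1 - s) with hbdef
  set c : ℝ := 1 - h with hcdef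
  have ha1 : h ≤ a := by
    have := (div_le_iff₀ hp).mp hs1; linarith [this]
  have ha2 : a ≤ 1 := by
    have := (le_div_iff₀ hp).mp hs2; linarith [this]
  have hb1 : h ≤ b := by nlinarith
  have hb2 : b ≤ 1 := by nlinarith
  have hapos : 0 < a := lt_of_lt_of_le h0 ha1
  have hbpos : 0 < b := lt_of_lt_of_le h0 hb1
  have hcpos : 0 < c := by simp [hcdef]; linarith
  have hab : a + b = 1 + h := by rw [hadef, hbdef]; ring
  set x : ℝ := (b^2 - a^2 - c^2) / (2 * a * c) with hxdef
  set y : ℝ := (a^2 - b^2 - c^2) / (2 * b * c) with hydef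
  have hx1 : -1 ≤ x := by
    rw [hxdef, le_div_iff₀ (by positivity)]
    nlinarith [sq_nonneg (b - a + c), sq_nonneg (b + a - c)]
  have hx2 : x ≤ 1 := by
    rw [hxdef, div_le_iff₀ (by positivity)]
    nlinarith [sq_nonneg (a + c - b), sq_nonneg (a + c + b)]
  have hy1 : -1 ≤ y := by
    rw [hydef, le_div_iff₀ (by positivity)]
    nlinarith [sq_nonneg (a - b + c), sq_nonneg (a + b - c)]
  have hy2 : y ≤ 1 := by
    rw [hydef, div_le_iff₀ (by positivity)]
    nlinarith [sq_nonneg (b + c - a), sq_nonneg (a + b + c)]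
  refine ⟨Real.arccos x / 2, -(Real.arccos y / 2),
    ⟨by have := Real.arccos_nonneg x; linarith, ?_⟩, ⟨?_, by
      have := Real.arccos_nonneg y; linarith⟩, ?_⟩
  · have := Real.arccos_le_pi x; linarith
  · have := Real.arccos_le_pi y; linarith
  · have hex : Complex.exp (2 * ((Real.arccos x / 2 : ℝ) : ℂ) * Complex.I)
        = (x : ℂ) + (Real.sqrt (1 - x^2) : ℂ) * Complex.I := by
      have h2 : (2 : ℂ) * ((Real.arccos x / 2 : ℝ) : ℂ) = ((Real.arccos x : ℝ) : ℂ) := by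
        push_cast; ring
      rw [h2, Complex.exp_mul_I, ← Complex.ofReal_cos, ← Complex.ofReal_sin,
        Real.cos_arccos hx1 hx2, Real.sin_arccos]
    have hey : Complex.exp (2 * ((-(Real.arccos y / 2) : ℝ) : ℂ) * Complex.I)
        = (y : ℂ) - (Real.sqrt (1 - y^2) : ℂ) * Complex.I := by
      have h2 : (2 : ℂ) * ((-(Real.arccos y / 2) : ℝ) : ℂ) = -((Real.arccos y : ℝ) : ℂ) := by
        push_cast; ring
      rw [h2, Complex.exp_mul_I, Complex.cos_neg, Complex.sin_neg,
        ← Complex.ofReal_cos, ← Complex.ofReal_sin,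
        Real.cos_arccos hy1 hy2, Real.sin_arccos]
      ring
    rw [hex, hey]
    have hre : c + a * x + b * y = 0 := by
      rw [hxdef, hydef]; field_simp; ring
    have him : a * Real.sqrt (1 - x^2) = b * Real.sqrt (1 - y^2) := by
      have h1 : a * Real.sqrt (1 - x^2) = Real.sqrt (a^2 * (1 - x^2)) := by
        rw [Real.sqrt_mul (by positivity), Real.sqrt_sq hapos.le]
      have h2 : b * Real.sqrt (1 - y^2) = Real.sqrt (b^2 * (1 - y^2)) := by
        rw [Real.sqrt_mul (by positivity), Real.sqrt_sq hbpos.le]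
      rw [h1, h2]
      congr 1
      rw [hxdef, hydef]; field_simp; ring
    have key : ((c : ℝ) : ℂ) + (a : ℝ) * ((x : ℂ) + (Real.sqrt (1 - x^2) : ℂ) * Complex.I)
        + (b : ℝ) * ((y : ℂ) - (Real.sqrt (1 - y^2) : ℂ) * Complex.I)
        = ((c + a * x + b * y : ℝ) : ℂ)
          + ((a * Real.sqrt (1 - x^2) - b * Real.sqrt (1 - y^2) : ℝ) : ℂ) * Complex.I := by
      push_cast; ring
    rw [key, hre, him]
    simp
end
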